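/- arXiv:1207.6127 — 7 statements merged into one kernel-verified Lean document; each statement's English description precedes it below -/
import Mathlib

section
/- For every integer n ≥ 6, the metric dimension of the line graph of the wheel graph W_{1,n} equals n − ⌈n/3⌉, i.e., dim(L(W_{1,n})) = n − ⌈n/3⌉. -/
open SimpleGraph

variable {V : Type*}

/-- `W` is a resolving set of `G`: every pair of distinct vertices is resolved
by some vertex of `W` via graph distance. -/
def IsResolvingSet (G : SimpleGraph V) (W : Set V) : Prop :=
  ∀ u v : V, u ≠ v → ∃ w ∈ W, G.dist u w ≠ G.dist v w

/-- The metric dimension of `G`: minimum cardinality of a resolving set. -/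
noncomputable def metricDim (G : SimpleGraph V) : ℕ :=
  sInf {k | ∃ W : Set V, W.ncard = k ∧ IsResolvingSet G W}

/-- One global application of the zero-forcing color-change rule:
a black vertex `u` forces its unique white neighbor to become black. -/
def zfStep (G : SimpleGraph V) (S : Set V) : Set V :=
  S ∪ {v | ∃ u ∈ S, G.Adj u v ∧ ∀ w, G.Adj u w → w ∉ S → w = v}

/-- `S` is a zero forcing set of `G` if iterating the color-change rule
starting from `S` eventually turns all vertices black. -/
def IsZeroForcingSet (G : SimpleGraph V) (S : Set V) : Prop :=
  ∃ m : ℕ, (zfStep G)^[m] S = Set.univ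

/-- The zero forcing number of `G`: minimum cardinality of a zero forcing set. -/
noncomputable def zeroForcingNum (G : SimpleGraph V) : ℕ :=
  sInf {k | ∃ S : Set V, S.ncard = k ∧ IsZeroForcingSet G S}

/-- The wheel graph `W_{1,n} = C_n + K_1`: hub `none` joined to the cycle `C_n`
on vertices `some i`, `i : Fin n`. -/
def wheelGraph (n : ℕ) : SimpleGraph (Option (Fin n)) :=
  SimpleGraph.fromRel (fun u v =>
    match u, v with
    | none, some _ => True
    | some i, some j => ((i : ℕ) : ZMod n) + 1 = ((j : ℕ) : ZMod n)
    | _, _ => False)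

/-- The bouquet of `n` circles of lengths `k 0 + 1, …, k (n-1) + 1`: the cut
vertex is `none`; the `i`-th circle consists of `none` together with the vertices
`some ⟨i, j⟩`, `j : Fin (k i)`, in cyclic order. -/
def bouquet (n : ℕ) (k : Fin n → ℕ) : SimpleGraph (Option (Σ i : Fin n, Fin (k i))) :=
  SimpleGraph.fromRel (fun u v =>
    match u, v with
    | none, some a => (a.2 : ℕ) = 0 ∨ (a.2 : ℕ) = k a.1 - 1
    | some a, some b => a.1 = b.1 ∧ ((b.2 : ℕ) = (a.2 : ℕ) + 1)
    | _, _ => False)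

/-- The path cover number of `G`: the minimum number of vertex-disjoint induced
paths covering all the vertices of `G`. -/
noncomputable def pathCoverNum (G : SimpleGraph V) : ℕ :=
  sInf {m | ∃ f : V → Fin m, ∀ i : Fin m,
    ∃ k, 1 ≤ k ∧ Nonempty ((G.induce (f ⁻¹' {i})) ≃g SimpleGraph.pathGraph k)}

/-- `G` contains a Hamiltonian path. -/
def HasHamiltonianPath [DecidableEq V] (G : SimpleGraph V) : Prop :=
  ∃ (u v : V) (p : G.Walk u v), p.IsHamiltonian

/-!
Index the spokes and rim edges of `W_{1,n}` by `ZMod n`: `spoke k = {hub, k}` and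
`rim k = {k, k + 1}`. In the line graph every vertex is within distance `2` of every spoke, so a
landmark tells two spokes apart only through adjacency, while rim edges three steps apart are at
distance `3`.

Lower bound. In a resolving set `W` at most one rim vertex is avoided by all landmarks, and `W`
meets `{rim (k - 1), rim (k + 1), spoke k, spoke (k + 1)}` for every `k` (otherwise the spokes
`k` and `k + 1` are twins). Hence each window `rim i, rim (i + 1), rim (i + 2), spoke (i + 1),
spoke (i + 2)` holds two landmarks, except the two windows around the avoided vertex, which hold
one. A rim edge lies in three windows and a spoke in two, so `3 |W| ≥ 2 n - 2`.

Upper bound. The rim edges indexed by a set with no isolated element and at most one pair of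
consecutive non-members resolve the line graph once `n ≥ 6`; dropping every third index, with
one adjustment at the seam when `n % 3 = 2`, gives such a set of size `n - ⌈n / 3⌉`.
-/

theorem ZMod.natCast_ne_zero_of_lt {n c : ℕ} (h0 : c ≠ 0) (hc : c < n) :
    (c : ZMod n) ≠ 0 := by
  rw [Ne, ZMod.natCast_eq_zero_iff]
  exact fun h => h0 (Nat.eq_zero_of_dvd_of_lt h hc)

theorem ZMod.ofNat_ne_zero_of_lt {n : ℕ} (c : ℕ) [c.AtLeastTwo] (hc : c < n) :
    (OfNat.ofNat c : ZMod n) ≠ 0 := by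
  rw [← Nat.cast_ofNat]
  exact ZMod.natCast_ne_zero_of_lt (c := c) (by have := Nat.AtLeastTwo.prop (n := c); omega) hc

theorem ZMod.val_add_one {n : ℕ} [Fact (1 < n)] (k : ZMod n) :
    (k + 1).val = if k.val + 1 = n then 0 else k.val + 1 := by
  rw [ZMod.val_add, ZMod.val_one n]
  split_ifs with h
  · rw [h, Nat.mod_self]
  · exact Nat.mod_eq_of_lt (by have := k.val_lt; omega)

theorem Fintype.sum_indicator_one {α : Type*} [Fintype α] (S : Set α) :
    ∑ i, S.indicator (1 : α → ℕ) i = S.ncard := by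
  classical
  simp [Set.indicator_apply, Finset.sum_boole, Set.ncard_eq_toFinset_card']

theorem Fintype.sum_indicator_one_add_right {G : Type*} [AddGroup G] [Fintype G] (S : Set G)
    (c : G) : ∑ i, S.indicator (1 : G → ℕ) (i + c) = S.ncard := by
  rw [← Fintype.sum_indicator_one,
    Fintype.sum_equiv (Equiv.addRight c) (fun i => S.indicator 1 (i + c)) _ fun _ => rfl]

theorem metricDim_eq_of_forall_le {V : Type*} {G : SimpleGraph V} {k : ℕ} {W : Set V}
    (hW : IsResolvingSet G W) (hk : W.ncard = k)
    (hle : ∀ W' : Set V, IsResolvingSet G W' → k ≤ W'.ncard) : metricDim G = k :=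
  le_antisymm (Nat.sInf_le ⟨W, hk, hW⟩)
    (le_csInf ⟨k, W, hk, hW⟩ fun _ ⟨W', hW', hres⟩ => hW' ▸ hle W' hres)

structure NoIsolatedAtMostOneGap {n : ℕ} (S : Set (ZMod n)) : Prop where
  pred_or_succ_mem : ∀ k ∈ S, k - 1 ∈ S ∨ k + 1 ∈ S
  eq_of_gap : ∀ k l, k ∉ S → k + 1 ∉ S → l ∉ S → l + 1 ∉ S → k = l

namespace NoIsolatedAtMostOneGap

variable {n : ℕ} [Fact (1 < n)] {S : Set (ZMod n)} (hS : NoIsolatedAtMostOneGap S)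
include hS

theorem succ_or_pred_mem {x : ZMod n} (hx : x ∉ S) : x + 1 ∈ S ∨ x - 1 ∈ S := by
  by_contra! h
  have := hS.eq_of_gap (x - 1) x h.2 (by rwa [sub_add_cancel]) hx h.1
  exact one_ne_zero (α := ZMod n) (by linear_combination -this)

theorem add_three_mem_of_gap {k : ZMod n} (hk : k ∉ S) (hk' : k + 1 ∉ S) : k + 3 ∈ S := by
  have h2 : k + 2 ∈ S := by
    by_contra h2
    have := hS.eq_of_gap k (k + 1) hk hk' hk' (by rwa [add_assoc, one_add_one_eq_two])
    exact one_ne_zero (α := ZMod n) (by linear_combination -this)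
  obtain h | h := hS.pred_or_succ_mem _ h2
  · exact absurd (by rwa [show k + 2 - 1 = k + 1 by ring] at h) hk'
  · rwa [add_assoc, show (2 : ZMod n) + 1 = 3 by norm_num] at h

theorem sub_two_mem_of_gap {k : ZMod n} (hk : k ∉ S) (hk' : k + 1 ∉ S) : k - 2 ∈ S := by
  have h1 : k - 1 ∈ S := by
    by_contra h1
    have := hS.eq_of_gap (k - 1) k h1 (by rwa [sub_add_cancel]) hk hk'
    exact one_ne_zero (α := ZMod n) (by linear_combination -this)
  obtain h | h := hS.pred_or_succ_mem _ h1
  · rwa [show k - 1 - 1 = k - 2 by ring] at h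
  · exact absurd (by rwa [sub_add_cancel] at h) hk

-- Below, `x = k ∨ x = k + 1` says that rim edge `k` meets spoke `x`, and
-- `k = y + 1 ∨ y = k + 1` that rim edges `k` and `y` meet.
theorem notMem_of_forall_iff (hn : 3 ≤ n) {x y : ZMod n} (hxy : x ≠ y)
    (h : ∀ k ∈ S, (x = k ∨ x = k + 1) ↔ (y = k ∨ y = k + 1)) : x ∉ S := by
  have h2 : (2 : ZMod n) ≠ 0 := ZMod.ofNat_ne_zero_of_lt 2 (by omega)
  intro hx
  have hy : y = x + 1 := ((h x hx).1 (Or.inl rfl)).resolve_left hxy.symm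
  obtain hx' | hx' := hS.pred_or_succ_mem x hx
  · obtain e | e := (h _ hx').1 (Or.inr (by ring))
    · exact h2 (by linear_combination e - hy)
    · exact hxy (by linear_combination -e)
  · obtain e | e := (h _ hx').2 (Or.inl hy)
    · exact one_ne_zero (α := ZMod n) (by linear_combination -e)
    · exact h2 (by linear_combination -e)

theorem exists_mem_separating_spokes (hn : 3 ≤ n) {x y : ZMod n} (hxy : x ≠ y) :
    ∃ k ∈ S, ¬((x = k ∨ x = k + 1) ↔ (y = k ∨ y = k + 1)) := by
  by_contra! h
  have h' : ∀ k ∈ S, (y = k ∨ y = k + 1) ↔ (x = k ∨ x = k + 1) := fun k hk =>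
    (h k hk).symm
  have hx := hS.notMem_of_forall_iff hn hxy h
  have hy := hS.notMem_of_forall_iff hn hxy.symm h'
  have hx' : x - 1 ∉ S := fun hm => ((h _ hm).1 (Or.inr (by ring))).elim
    (fun e => hy (e ▸ hm)) (fun e => hxy (by linear_combination -e))
  have hy' : y - 1 ∉ S := fun hm => ((h' _ hm).1 (Or.inr (by ring))).elim
    (fun e => hx (e ▸ hm)) (fun e => hxy (by linear_combination e))
  have := hS.eq_of_gap (x - 1) (y - 1) hx' (by rwa [sub_add_cancel]) hy' (by rwa [sub_add_cancel])
  exact hxy (by linear_combination this)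

theorem exists_mem_separating_rims {x y : ZMod n} (hx : x ∉ S) (hy : y ∉ S) (hxy : x ≠ y) :
    ∃ k ∈ S, (k = x + 1 ∨ x = k + 1) ∧ ¬(k = y + 1 ∨ y = k + 1) := by
  obtain h | h := hS.succ_or_pred_mem hx
  · refine ⟨x + 1, h, Or.inl rfl, ?_⟩
    rintro (e | e)
    · exact hxy (by linear_combination e)
    · obtain h' | h' := hS.pred_or_succ_mem _ h
      · exact hx (by rwa [add_sub_cancel_right] at h')
      · exact hy (e ▸ h')
  · refine ⟨x - 1, h, Or.inr (by ring), ?_⟩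
    rintro (e | e)
    · obtain h' | h' := hS.pred_or_succ_mem _ h
      · exact hy (by rwa [show x - 1 - 1 = y by linear_combination e] at h')
      · exact hx (by rwa [sub_add_cancel] at h')
    · exact hxy (by linear_combination -e)

theorem exists_mem_separating_spoke_rim_or_far (hn : 4 ≤ n) {y : ZMod n} (hy : y ∉ S)
    (x : ZMod n) :
    (∃ k ∈ S, (k = y + 1 ∨ y = k + 1) ∧ ¬(x = k ∨ x = k + 1)) ∨ y + 3 ∈ S ∨ y - 3 ∈ S := by
  by_cases hsucc : y + 1 ∈ S
  · by_cases hpred : y - 1 ∈ S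
    · left
      by_cases hx : x = y + 1 ∨ x = y + 1 + 1
      · refine ⟨y - 1, hpred, Or.inr (by ring), ?_⟩
        have h1 : (1 : ZMod n) ≠ 0 := one_ne_zero
        have h2 : (2 : ZMod n) ≠ 0 := ZMod.ofNat_ne_zero_of_lt 2 (by omega)
        have h3 : (3 : ZMod n) ≠ 0 := ZMod.ofNat_ne_zero_of_lt 3 (by omega)
        obtain e | e := hx <;> rintro (e' | e')
        · exact h2 (by linear_combination e' - e)
        · exact h1 (by linear_combination e' - e)
        · exact h3 (by linear_combination e' - e)
        · exact h2 (by linear_combination e' - e)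
      · exact ⟨y + 1, hsucc, Or.inl rfl, hx⟩
    · exact Or.inr (Or.inr (by
        simpa [sub_sub, show (1 : ZMod n) + 2 = 3 by norm_num] using
          hS.sub_two_mem_of_gap hpred (by rwa [sub_add_cancel])))
  · exact Or.inr (Or.inl (hS.add_three_mem_of_gap hy hsucc))

end NoIsolatedAtMostOneGap

/-- The non-landmark indices are spaced three apart, except for a single adjacent pair
when `3 ∤ n`. -/
def landmarkVal (n v : ℕ) : Prop := (v % 3 ≠ 0 ∧ v < 3 * (n / 3)) ∨ (n % 3 = 2 ∧ v = 0)

instance (n : ℕ) : DecidablePred (landmarkVal n) := fun v =>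
  inferInstanceAs (Decidable ((v % 3 ≠ 0 ∧ v < 3 * (n / 3)) ∨ (n % 3 = 2 ∧ v = 0)))

def landmarks (n : ℕ) : Set (ZMod n) := {k | landmarkVal n k.val}

open Finset in
theorem card_filter_landmarkVal (n : ℕ) :
    #{v ∈ range n | landmarkVal n v} = n - (n + 2) / 3 := by
  suffices h : ∀ N ≤ n, #{v ∈ range N | landmarkVal n v} =
      min N (3 * (n / 3)) - (min N (3 * (n / 3)) + 2) / 3 + if n % 3 = 2 ∧ 0 < N then 1 else 0 by
    rw [h n le_rfl]
    split_ifs <;> omega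
  intro N hN
  induction N with
  | zero => simp
  | succ N ih =>
    rw [range_add_one, filter_insert]
    have ih := ih (by omega)
    by_cases hv : landmarkVal n N
    · rw [if_pos hv, card_insert_of_notMem (by simp), ih]
      unfold landmarkVal at hv
      split_ifs <;> omega
    · rw [if_neg hv, ih]
      unfold landmarkVal at hv
      split_ifs <;> omega

theorem ncard_landmarks (n : ℕ) [NeZero n] : (landmarks n).ncard = n - (n + 2) / 3 := by
  rw [← Set.ncard_image_of_injective _ (ZMod.val_injective n), ← card_filter_landmarkVal,
    ← Set.ncard_coe_finset]
  congr 1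
  ext v
  simp only [Set.mem_image, landmarks, Set.mem_ofPred_eq, Finset.coe_filter, Finset.mem_range]
  constructor
  · rintro ⟨k, hk, rfl⟩
    exact ⟨k.val_lt, hk⟩
  · rintro ⟨hv, hk⟩
    exact ⟨v, by rwa [ZMod.val_cast_of_lt hv], ZMod.val_cast_of_lt hv⟩

theorem noIsolatedAtMostOneGap_landmarks {n : ℕ} (hn : 3 ≤ n) :
    NoIsolatedAtMostOneGap (landmarks n) where
  pred_or_succ_mem k hk := by
    have : Fact (1 < n) := ⟨by omega⟩
    obtain ⟨j, rfl⟩ : ∃ j, k = j + 1 := ⟨k - 1, by ring⟩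
    rw [add_sub_cancel_right]
    simp only [landmarks, Set.mem_ofPred_eq, landmarkVal] at *
    rw [ZMod.val_add_one (j + 1), ZMod.val_add_one j] at *
    have := j.val_lt
    split_ifs at * <;> omega
  eq_of_gap k l hk hk' hl hl' := by
    have : Fact (1 < n) := ⟨by omega⟩
    simp only [landmarks, Set.mem_ofPred_eq, landmarkVal, ZMod.val_add_one] at *
    have := k.val_lt
    have := l.val_lt
    apply ZMod.val_injective
    split_ifs at * <;> omega

namespace WheelGraph

variable {n : ℕ} [Fact (1 < n)]

def rimVertex (k : ZMod n) : Option (Fin n) := some ⟨k.val, k.val_lt⟩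

theorem rimVertex_injective : Function.Injective (rimVertex (n := n)) := fun _ _ h =>
  ZMod.val_injective n (by simpa [rimVertex] using h)

theorem rimVertex_ne_none (k : ZMod n) : rimVertex k ≠ none := nofun

theorem some_eq_rimVertex (i : Fin n) : some i = rimVertex (i : ZMod n) := by
  simp [rimVertex, ZMod.val_cast_of_lt i.isLt]

theorem adj_none_rimVertex (k : ZMod n) : (wheelGraph n).Adj none (rimVertex k) := by
  simp [wheelGraph, rimVertex]

theorem adj_rimVertex_add_one (k : ZMod n) :
    (wheelGraph n).Adj (rimVertex k) (rimVertex (k + 1)) := by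
  rw [wheelGraph, fromRel_adj]
  refine ⟨fun h => one_ne_zero (α := ZMod n) (by simpa using rimVertex_injective h), Or.inl ?_⟩
  simp [rimVertex]

def spoke (k : ZMod n) : (wheelGraph n).edgeSet :=
  ⟨s(none, rimVertex k), adj_none_rimVertex k⟩

def rim (k : ZMod n) : (wheelGraph n).edgeSet :=
  ⟨s(rimVertex k, rimVertex (k + 1)), adj_rimVertex_add_one k⟩

theorem spoke_injective : Function.Injective (spoke (n := n)) := by
  intro k l h
  have h := congrArg Subtype.val h
  simp only [spoke, Sym2.eq_iff] at h
  obtain ⟨-, h⟩ | ⟨h, -⟩ := h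
  · exact rimVertex_injective h
  · exact absurd h.symm (rimVertex_ne_none l)

theorem rim_injective (hn : 3 ≤ n) : Function.Injective (rim (n := n)) := by
  intro k l h
  have h := congrArg Subtype.val h
  simp only [rim, Sym2.eq_iff] at h
  obtain ⟨h, -⟩ | ⟨h₁, h₂⟩ := h
  · exact rimVertex_injective h
  · have h₁ := rimVertex_injective h₁
    have h₂ := rimVertex_injective h₂
    have h2 : (2 : ZMod n) ≠ 0 := ZMod.ofNat_ne_zero_of_lt 2 (by omega)
    exact absurd (by linear_combination h₂ - h₁) h2

theorem spoke_ne_rim (k l : ZMod n) : spoke k ≠ rim l := by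
  intro h
  have h := congrArg Subtype.val h
  simp only [spoke, rim, Sym2.eq_iff] at h
  obtain ⟨h, -⟩ | ⟨h, -⟩ := h <;> exact rimVertex_ne_none _ h.symm

theorem spoke_or_rim (e : (wheelGraph n).edgeSet) : (∃ k, e = spoke k) ∨ ∃ k, e = rim k := by
  obtain ⟨e, he⟩ := e
  induction e with | _ u v => ?_
  rw [mem_edgeSet, wheelGraph, fromRel_adj] at he
  rcases u with _ | i <;> rcases v with _ | j
  · exact absurd rfl he.1
  · exact Or.inl ⟨j, by simp [spoke, some_eq_rimVertex j]⟩
  · exact Or.inl ⟨i, by simp [spoke, some_eq_rimVertex i, Sym2.eq_swap]⟩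
  · obtain h | h := he.2
    · exact Or.inr ⟨i, by simp [rim, some_eq_rimVertex i, some_eq_rimVertex j, ← h]⟩
    · refine Or.inr ⟨j, ?_⟩
      simp [rim, some_eq_rimVertex i, some_eq_rimVertex j, ← h, Sym2.eq_swap]

theorem lineGraph_adj_spoke_spoke {k l : ZMod n} :
    (wheelGraph n).lineGraph.Adj (spoke k) (spoke l) ↔ k ≠ l := by
  rw [lineGraph_adj_iff_exists]
  refine ⟨fun h hkl => h.1 (hkl ▸ rfl), fun h => ⟨spoke_injective.ne h, none, ?_, ?_⟩⟩ <;>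
    simp [spoke]

theorem lineGraph_adj_spoke_rim {k l : ZMod n} :
    (wheelGraph n).lineGraph.Adj (spoke k) (rim l) ↔ k = l ∨ k = l + 1 := by
  rw [lineGraph_adj_iff_exists]
  simp only [ne_eq, spoke_ne_rim, not_false_eq_true, true_and]
  simp [spoke, rim, rimVertex_injective.eq_iff, (rimVertex_ne_none _).symm]

theorem lineGraph_adj_rim_rim (hn : 3 ≤ n) {k l : ZMod n} :
    (wheelGraph n).lineGraph.Adj (rim k) (rim l) ↔ l = k + 1 ∨ k = l + 1 := by
  have h2 : (2 : ZMod n) ≠ 0 := ZMod.ofNat_ne_zero_of_lt 2 (by omega)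
  rw [lineGraph_adj_iff_exists, (rim_injective hn).ne_iff]
  simp only [rim, Sym2.mem_iff, or_and_right, exists_or, exists_eq_left, rimVertex_injective.eq_iff]
  grind

theorem lineGraph_connected : (wheelGraph n).lineGraph.Connected := by
  have hspoke (k l : ZMod n) : (wheelGraph n).lineGraph.Reachable (spoke k) (spoke l) := by
    by_cases h : k = l
    · rw [h]
    · exact (lineGraph_adj_spoke_spoke.2 h).reachable
  rw [connected_iff_exists_forall_reachable]
  refine ⟨spoke 0, fun e => ?_⟩
  obtain ⟨k, rfl⟩ | ⟨k, rfl⟩ := spoke_or_rim e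
  · exact hspoke 0 k
  · exact (hspoke 0 k).trans (lineGraph_adj_spoke_rim.2 (Or.inl rfl)).reachable

theorem dist_spoke_eq_two {k : ZMod n} {e : (wheelGraph n).edgeSet} (hne : spoke k ≠ e)
    (hadj : ¬(wheelGraph n).lineGraph.Adj (spoke k) e) :
    (wheelGraph n).lineGraph.dist (spoke k) e = 2 := by
  refine le_antisymm ?_ (lineGraph_connected.one_lt_dist_of_ne_of_not_adj hne hadj)
  obtain ⟨l, rfl⟩ | ⟨l, rfl⟩ := spoke_or_rim e
  · exact absurd (lineGraph_adj_spoke_spoke.2 fun h => hne (congrArg spoke h)) hadj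
  · have hkl : k ≠ l := fun h => hadj (lineGraph_adj_spoke_rim.2 (Or.inl h))
    exact dist_le (.cons (lineGraph_adj_spoke_spoke.2 hkl)
      (.cons (lineGraph_adj_spoke_rim.2 (Or.inl rfl)) .nil))

theorem dist_spoke_le_two (k : ZMod n) (e : (wheelGraph n).edgeSet) :
    (wheelGraph n).lineGraph.dist (spoke k) e ≤ 2 := by
  by_cases hne : spoke k = e
  · simp [hne]
  by_cases hadj : (wheelGraph n).lineGraph.Adj (spoke k) e
  · rw [dist_eq_one_iff_adj.2 hadj]
    norm_num
  · rw [dist_spoke_eq_two hne hadj]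

theorem dist_spoke_eq_dist_spoke {k l : ZMod n} {e : (wheelGraph n).edgeSet}
    (hk : spoke k ≠ e) (hl : spoke l ≠ e)
    (h : (wheelGraph n).lineGraph.Adj (spoke k) e ↔ (wheelGraph n).lineGraph.Adj (spoke l) e) :
    (wheelGraph n).lineGraph.dist (spoke k) e = (wheelGraph n).lineGraph.dist (spoke l) e := by
  by_cases hadj : (wheelGraph n).lineGraph.Adj (spoke k) e
  · rw [dist_eq_one_iff_adj.2 hadj, dist_eq_one_iff_adj.2 (h.1 hadj)]
  · rw [dist_spoke_eq_two hk hadj, dist_spoke_eq_two hl (h.not.1 hadj)]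

theorem three_le_dist_rim_add_three (hn : 6 ≤ n) (k : ZMod n) :
    3 ≤ (wheelGraph n).lineGraph.dist (rim k) (rim (k + 3)) := by
  have h1 : (1 : ZMod n) ≠ 0 := one_ne_zero
  have h2 : (2 : ZMod n) ≠ 0 := ZMod.ofNat_ne_zero_of_lt 2 (by omega)
  have h3 : (3 : ZMod n) ≠ 0 := ZMod.ofNat_ne_zero_of_lt 3 (by omega)
  have h4 : (4 : ZMod n) ≠ 0 := ZMod.ofNat_ne_zero_of_lt 4 (by omega)
  have h5 : (5 : ZMod n) ≠ 0 := ZMod.ofNat_ne_zero_of_lt 5 (by omega)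
  have hne : rim k ≠ rim (k + 3) := fun h =>
    h3 (by linear_combination -rim_injective (by omega) h)
  have hnadj : ¬(wheelGraph n).lineGraph.Adj (rim k) (rim (k + 3)) := by
    rw [lineGraph_adj_rim_rim (by omega)]
    rintro (h | h)
    · exact h2 (by linear_combination h)
    · exact h4 (by linear_combination -h)
  have hcommon : (wheelGraph n).lineGraph.commonNeighbors (rim k) (rim (k + 3)) = ∅ := by
    refine Set.eq_empty_iff_forall_notMem.2 fun e he => ?_
    rw [mem_commonNeighbors, (wheelGraph n).lineGraph.adj_comm (rim k),
      (wheelGraph n).lineGraph.adj_comm (rim (k + 3))] at he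
    obtain ⟨m, rfl⟩ | ⟨m, rfl⟩ := spoke_or_rim e
    · rw [lineGraph_adj_spoke_rim, lineGraph_adj_spoke_rim] at he
      obtain ⟨rfl | rfl, h | h⟩ := he
      · exact h3 (by linear_combination -h)
      · exact h4 (by linear_combination -h)
      · exact h2 (by linear_combination -h)
      · exact h3 (by linear_combination -h)
    · rw [lineGraph_adj_rim_rim (by omega), lineGraph_adj_rim_rim (by omega)] at he
      obtain ⟨h | h, h' | h'⟩ := he
      · exact h3 (by linear_combination h' - h)
      · exact h5 (by linear_combination -h - h')
      · exact h1 (by linear_combination h + h')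
      · exact h3 (by linear_combination h - h')
  have hfar := two_lt_edist_iff.2 ⟨hne, hnadj, hcommon⟩
  rw [← (lineGraph_connected.preconnected _ _).coe_dist_eq_edist] at hfar
  exact_mod_cast hfar

section Upper

variable {S : Set (ZMod n)}

theorem exists_dist_spoke_ne_dist_rim (hn : 6 ≤ n) (hS : NoIsolatedAtMostOneGap S)
    (x y : ZMod n) :
    ∃ w ∈ rim '' S,
      (wheelGraph n).lineGraph.dist (spoke x) w ≠ (wheelGraph n).lineGraph.dist (rim y) w := by
  by_cases hy : y ∈ S
  · refine ⟨rim y, Set.mem_image_of_mem rim hy, ?_⟩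
    rw [dist_self]
    exact (lineGraph_connected.pos_dist_of_ne (spoke_ne_rim x y)).ne'
  obtain ⟨k, hk, hyk, hxk⟩ | hfar | hfar :=
    hS.exists_mem_separating_spoke_rim_or_far (by omega) hy x
  · refine ⟨rim k, Set.mem_image_of_mem rim hk, ?_⟩
    rw [dist_spoke_eq_two (spoke_ne_rim x k) (by rwa [lineGraph_adj_spoke_rim]),
      dist_eq_one_iff_adj.2 ((lineGraph_adj_rim_rim (by omega)).2 hyk)]
    norm_num
  · refine ⟨rim (y + 3), Set.mem_image_of_mem rim hfar, ?_⟩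
    exact ((dist_spoke_le_two x _).trans_lt (three_le_dist_rim_add_three hn y)).ne
  · refine ⟨rim (y - 3), Set.mem_image_of_mem rim hfar, ?_⟩
    have := three_le_dist_rim_add_three hn (y - 3)
    rw [sub_add_cancel, dist_comm] at this
    exact ((dist_spoke_le_two x _).trans_lt this).ne

theorem isResolvingSet_image_rim (hn : 6 ≤ n) (hS : NoIsolatedAtMostOneGap S) :
    IsResolvingSet (wheelGraph n).lineGraph (rim '' S) := by
  intro u v huv
  obtain ⟨x, rfl⟩ | ⟨x, rfl⟩ := spoke_or_rim u <;>
    obtain ⟨y, rfl⟩ | ⟨y, rfl⟩ := spoke_or_rim v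
  · obtain ⟨k, hk, hsep⟩ :=
      hS.exists_mem_separating_spokes (by omega) fun h => huv (congrArg spoke h)
    refine ⟨rim k, Set.mem_image_of_mem rim hk, fun h => hsep ?_⟩
    rw [← lineGraph_adj_spoke_rim, ← lineGraph_adj_spoke_rim, ← dist_eq_one_iff_adj,
      ← dist_eq_one_iff_adj, h]
  · exact exists_dist_spoke_ne_dist_rim hn hS x y
  · obtain ⟨w, hw, h⟩ := exists_dist_spoke_ne_dist_rim hn hS y x
    exact ⟨w, hw, h.symm⟩
  · by_cases hx : x ∈ S
    · refine ⟨rim x, Set.mem_image_of_mem rim hx, ?_⟩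
      rw [dist_self]
      exact (lineGraph_connected.pos_dist_of_ne huv.symm).ne
    by_cases hy : y ∈ S
    · refine ⟨rim y, Set.mem_image_of_mem rim hy, ?_⟩
      rw [dist_self]
      exact (lineGraph_connected.pos_dist_of_ne huv).ne'
    obtain ⟨k, hk, hxk, hyk⟩ :=
      hS.exists_mem_separating_rims hx hy fun h => huv (congrArg rim h)
    refine ⟨rim k, Set.mem_image_of_mem rim hk, ?_⟩
    rw [dist_eq_one_iff_adj.2 ((lineGraph_adj_rim_rim (by omega)).2 hxk)]
    exact fun h => hyk ((lineGraph_adj_rim_rim (by omega)).1 (dist_eq_one_iff_adj.1 h.symm))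

end Upper

section Lower

variable {W : Set (wheelGraph n).edgeSet}

/-- No edge of `W` is incident to the rim vertex `k`. -/
def AvoidsRimVertex (W : Set (wheelGraph n).edgeSet) (k : ZMod n) : Prop :=
  spoke k ∉ W ∧ rim (k - 1) ∉ W ∧ rim k ∉ W

theorem AvoidsRimVertex.not_adj {k m : ZMod n} (hk : AvoidsRimVertex W k) (hm : rim m ∈ W) :
    ¬(k = m ∨ k = m + 1) := by
  rintro (h | h)
  · exact hk.2.2 (h ▸ hm)
  · exact hk.2.1 (by rwa [h, add_sub_cancel_right])

theorem eq_of_avoidsRimVertex (hW : IsResolvingSet (wheelGraph n).lineGraph W)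
    {k l : ZMod n} (hk : AvoidsRimVertex W k) (hl : AvoidsRimVertex W l) : k = l := by
  by_contra hkl
  obtain ⟨w, hw, hd⟩ := hW (spoke k) (spoke l) (spoke_injective.ne hkl)
  refine hd (dist_spoke_eq_dist_spoke (ne_of_mem_of_not_mem hw hk.1).symm
    (ne_of_mem_of_not_mem hw hl.1).symm ?_)
  obtain ⟨m, rfl⟩ | ⟨m, rfl⟩ := spoke_or_rim w
  · rw [lineGraph_adj_spoke_spoke, lineGraph_adj_spoke_spoke]
    exact iff_of_true (fun h => hk.1 (h ▸ hw)) (fun h => hl.1 (h ▸ hw))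
  · rw [lineGraph_adj_spoke_rim, lineGraph_adj_spoke_rim]
    exact iff_of_false (hk.not_adj hw) (hl.not_adj hw)

theorem rim_pred_or_rim_succ_or_spoke_or_spoke_succ_mem
    (hW : IsResolvingSet (wheelGraph n).lineGraph W) (k : ZMod n) :
    rim (k - 1) ∈ W ∨ rim (k + 1) ∈ W ∨ spoke k ∈ W ∨ spoke (k + 1) ∈ W := by
  by_contra! h
  obtain ⟨h₁, h₂, h₃, h₄⟩ := h
  obtain ⟨w, hw, hd⟩ := hW (spoke k) (spoke (k + 1)) (spoke_injective.ne (by simp))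
  refine hd (dist_spoke_eq_dist_spoke (ne_of_mem_of_not_mem hw h₃).symm
    (ne_of_mem_of_not_mem hw h₄).symm ?_)
  obtain ⟨m, rfl⟩ | ⟨m, rfl⟩ := spoke_or_rim w
  · rw [lineGraph_adj_spoke_spoke, lineGraph_adj_spoke_spoke]
    exact iff_of_true (fun h => h₃ (h ▸ hw)) (fun h => h₄ (h ▸ hw))
  · rw [lineGraph_adj_spoke_rim, lineGraph_adj_spoke_rim]
    have hm₁ : m ≠ k - 1 := fun h => h₁ (h ▸ hw)
    have hm₂ : m ≠ k + 1 := fun h => h₂ (h ▸ hw)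
    constructor
    · rintro (h | h)
      · exact Or.inr (by rw [h])
      · exact absurd (by linear_combination -h) hm₁
    · rintro (h | h)
      · exact absurd h.symm hm₂
      · exact Or.inl (by linear_combination h)

noncomputable def windowCount (W : Set (wheelGraph n).edgeSet) (i : ZMod n) : ℕ :=
  (rim ⁻¹' W).indicator 1 i + (rim ⁻¹' W).indicator 1 (i + 1) +
    (rim ⁻¹' W).indicator 1 (i + 2) + (spoke ⁻¹' W).indicator 1 (i + 1) +
    (spoke ⁻¹' W).indicator 1 (i + 2)

theorem two_le_windowCount (hW : IsResolvingSet (wheelGraph n).lineGraph W)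
    (i : ZMod n) :
    2 ≤ windowCount W i + {k | AvoidsRimVertex W k}.indicator 1 (i + 1) +
      {k | AvoidsRimVertex W k}.indicator 1 (i + 2) := by
  classical
  have hne : ¬(AvoidsRimVertex W (i + 1) ∧ AvoidsRimVertex W (i + 2)) := fun ⟨h₁, h₂⟩ =>
    one_ne_zero (α := ZMod n) (by linear_combination eq_of_avoidsRimVertex hW h₂ h₁)
  have hnear := rim_pred_or_rim_succ_or_spoke_or_spoke_succ_mem hW (i + 1)
  simp only [AvoidsRimVertex, add_sub_cancel_right, (by ring : i + 2 - 1 = i + 1),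
    (by ring : i + 1 + 1 = i + 2)] at hne hnear
  simp only [windowCount, AvoidsRimVertex, Set.indicator_apply, Set.mem_preimage, Set.mem_ofPred_eq,
    Pi.one_apply, add_sub_cancel_right, (by ring : i + 2 - 1 = i + 1)]
  by_cases ha : rim i ∈ W <;> by_cases hb : rim (i + 1) ∈ W <;>
    by_cases hc : rim (i + 2) ∈ W <;> by_cases hd : spoke (i + 1) ∈ W <;>
    by_cases he : spoke (i + 2) ∈ W <;>
    simp [ha, hb, hc, hd, he] at hne hnear ⊢

theorem sum_windowCount (W : Set (wheelGraph n).edgeSet) :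
    ∑ i, windowCount W i = 3 * (rim ⁻¹' W).ncard + 2 * (spoke ⁻¹' W).ncard := by
  simp only [windowCount, Finset.sum_add_distrib, Fintype.sum_indicator_one,
    Fintype.sum_indicator_one_add_right]
  ring

theorem ncard_eq_ncard_preimage_spoke_add_ncard_preimage_rim (hn : 3 ≤ n)
    (W : Set (wheelGraph n).edgeSet) : W.ncard = (spoke ⁻¹' W).ncard + (rim ⁻¹' W).ncard := by
  have hW : W = spoke '' (spoke ⁻¹' W) ∪ rim '' (rim ⁻¹' W) := by
    ext e
    obtain ⟨k, rfl⟩ | ⟨k, rfl⟩ := spoke_or_rim e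
    · simp [spoke_injective.eq_iff, (spoke_ne_rim _ _).symm]
    · simp [(rim_injective hn).eq_iff, spoke_ne_rim]
  have hdisj : Disjoint (spoke '' (spoke ⁻¹' W)) (rim '' (rim ⁻¹' W)) := by
    rw [Set.disjoint_left]
    rintro _ ⟨k, -, rfl⟩ ⟨l, -, h⟩
    exact spoke_ne_rim k l h.symm
  calc W.ncard = (spoke '' (spoke ⁻¹' W) ∪ rim '' (rim ⁻¹' W)).ncard := congrArg _ hW
    _ = (spoke ⁻¹' W).ncard + (rim ⁻¹' W).ncard := by
      rw [Set.ncard_union_eq hdisj, Set.ncard_image_of_injective _ spoke_injective,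
        Set.ncard_image_of_injective _ (rim_injective hn)]

theorem le_ncard_of_isResolvingSet (hn : 3 ≤ n)
    (hW : IsResolvingSet (wheelGraph n).lineGraph W) : n - (n + 2) / 3 ≤ W.ncard := by
  set A := {k | AvoidsRimVertex W k}
  have hA : A.ncard ≤ 1 :=
    (Set.ncard_le_one A.toFinite).2 fun k hk l hl => eq_of_avoidsRimVertex hW hk hl
  have hsum : 2 * n ≤ 3 * (rim ⁻¹' W).ncard + 2 * (spoke ⁻¹' W).ncard + 2 * A.ncard :=
    calc 2 * n = ∑ _i : ZMod n, 2 := by simp [ZMod.card, mul_comm]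
      _ ≤ ∑ i, (windowCount W i + A.indicator 1 (i + 1) + A.indicator 1 (i + 2)) :=
        Finset.sum_le_sum fun i _ => two_le_windowCount hW i
      _ = 3 * (rim ⁻¹' W).ncard + 2 * (spoke ⁻¹' W).ncard + 2 * A.ncard := by
        simp only [Finset.sum_add_distrib, sum_windowCount, Fintype.sum_indicator_one_add_right]
        ring
  rw [ncard_eq_ncard_preimage_spoke_add_ncard_preimage_rim hn W]
  omega

end Lower

end WheelGraph

/-- For every integer `n ≥ 6`, the metric dimension of the line graph of the wheel
graph `W_{1,n}` equals `n - ⌈n/3⌉` (note `⌈n/3⌉ = (n+2)/3` in natural division). -/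
theorem metricDim_lineGraph_wheelGraph (n : ℕ) (hn : 6 ≤ n) :
    metricDim (wheelGraph n).lineGraph = n - (n + 2) / 3 := by
  have : Fact (1 < n) := ⟨by omega⟩
  refine metricDim_eq_of_forall_le
    (WheelGraph.isResolvingSet_image_rim hn (noIsolatedAtMostOneGap_landmarks (by omega))) ?_
    fun W hW => WheelGraph.le_ncard_of_isResolvingSet (by omega) hW
  rw [Set.ncard_image_of_injective _ (WheelGraph.rim_injective (by omega)), ncard_landmarks]
end

section
/- The metric dimension of the line graph of the wheel graph satisfies dim(L(W_{1,3})) = 3, dim(L(W_{1,4})) = 3, and dim(L(W_{1,5})) = 4. -/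
open SimpleGraph

variable {V : Type*}

/-! Each of these line graphs has diameter at most two, so the distance between two edges of the
wheel is 0, 1 or 2 according as they are equal, share an endpoint, or neither. Being a resolving
set then becomes a decidable condition on a finite set of edges, and an exhaustive check shows
that the spokes at `0, 1, 2` (at `0, 1, 2, 3` for `W_{1,5}`) resolve while no set with one edge
fewer does. -/

namespace SimpleGraph

def adjDist (G : SimpleGraph V) [DecidableEq V] [DecidableRel G.Adj] (u v : V) : ℕ :=
  if u = v then 0 else if G.Adj u v then 1 else 2

theorem dist_eq_adjDist {G : SimpleGraph V} [DecidableEq V] [DecidableRel G.Adj]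
    (hG : ∀ u v, u ≠ v → ¬G.Adj u v → ∃ w, G.Adj u w ∧ G.Adj w v) (u v : V) :
    G.dist u v = G.adjDist u v := by
  unfold adjDist
  split_ifs with huv hadj
  · subst huv
    exact dist_self
  · exact dist_eq_one_iff_adj.mpr hadj
  · obtain ⟨w, huw, hwv⟩ := hG u v huv hadj
    let p : G.Walk u v := huw.toWalk.append hwv.toWalk
    have hle : G.dist u v ≤ 2 := by simpa [p] using dist_le p
    have hpos : G.dist u v ≠ 0 := (Reachable.dist_eq_zero_iff ⟨p⟩).not.mpr huv
    have hne : G.dist u v ≠ 1 := fun h => hadj (dist_eq_one_iff_adj.mp h)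
    omega

end SimpleGraph

theorem IsResolvingSet.mono {G : SimpleGraph V} {W W' : Set V} (hWW' : W ⊆ W')
    (hW : IsResolvingSet G W) : IsResolvingSet G W' := fun u v huv =>
  let ⟨w, hw, hd⟩ := hW u v huv
  ⟨w, hWW' hw, hd⟩

theorem isResolvingSet_coe_iff_adjDist {G : SimpleGraph V} [DecidableEq V] [DecidableRel G.Adj]
    (hG : ∀ u v, u ≠ v → ¬G.Adj u v → ∃ w, G.Adj u w ∧ G.Adj w v) (s : Finset V) :
    IsResolvingSet G s ↔ ∀ u v, u ≠ v → ∃ w ∈ s, G.adjDist u w ≠ G.adjDist v w := by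
  simp only [IsResolvingSet, dist_eq_adjDist hG, Finset.mem_coe]

theorem metricDim_eq_card [Finite V] {G : SimpleGraph V} (s : Finset V)
    (hs : IsResolvingSet G s)
    (hmin : ∀ t : Finset V, t.card + 1 = s.card → ¬IsResolvingSet G t) :
    metricDim G = s.card := by
  have hmem : s.card ∈ {k | ∃ W : Set V, W.ncard = k ∧ IsResolvingSet G W} :=
    ⟨s, Set.ncard_coe_finset s, hs⟩
  refine le_antisymm (Nat.sInf_le hmem) (le_csInf ⟨_, hmem⟩ ?_)
  rintro _ ⟨W, rfl, hW⟩
  by_contra! hlt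
  -- grow `W` inside `W ∪ s` to a resolving set with one element fewer than `s`
  have hsW : s.card ≤ (W ∪ s).ncard := by
    simpa using Set.ncard_le_ncard (Set.subset_union_right (s := W) (t := ↑s))
  obtain ⟨U, hWU, -, hUcard⟩ := Set.exists_subsuperset_card_eq (n := s.card - 1)
    (Set.subset_union_left : W ⊆ W ∪ s) (by omega) (by omega)
  lift U to Finset V using U.toFinite
  exact hmin U (by simp only [Set.ncard_coe_finset] at hUcard; omega) (hW.mono hWU)

theorem metricDim_eq_of_adjDist [Finite V] {G : SimpleGraph V} [DecidableEq V]
    [DecidableRel G.Adj] (hG : ∀ u v, u ≠ v → ¬G.Adj u v → ∃ w, G.Adj u w ∧ G.Adj w v)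
    {k : ℕ} (s : Finset V) (hcard : s.card = k)
    (hs : ∀ u v, u ≠ v → ∃ w ∈ s, G.adjDist u w ≠ G.adjDist v w)
    (hmin : ∀ t : Finset V, t.card + 1 = k →
      ∃ u v, u ≠ v ∧ ∀ w ∈ t, G.adjDist u w = G.adjDist v w) :
    metricDim G = k := by
  subst hcard
  refine metricDim_eq_card s ((isResolvingSet_coe_iff_adjDist hG s).2 hs) fun t ht hres => ?_
  obtain ⟨u, v, huv, hsame⟩ := hmin t ht
  obtain ⟨w, hw, hdiff⟩ := (isResolvingSet_coe_iff_adjDist hG t).1 hres u v huv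
  exact hdiff (hsame w hw)

namespace wheelGraph

instance (n : ℕ) : DecidableRel (wheelGraph n).Adj := fun u v => by
  show Decidable (u ≠ v ∧ _)
  cases u <;> cases v <;> exact inferInstance

instance (n : ℕ) : DecidableRel (wheelGraph n).lineGraph.Adj := fun _ _ =>
  decidable_of_iff' _ lineGraph_adj_iff_exists

theorem adj_none_some (n : ℕ) (i : Fin n) : (wheelGraph n).Adj none (some i) := by
  simp [wheelGraph]

def spoke {n : ℕ} (i : Fin n) : (wheelGraph n).edgeSet := ⟨s(none, some i), adj_none_some n i⟩

theorem metricDim_lineGraph_three : metricDim (wheelGraph 3).lineGraph = 3 :=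
  metricDim_eq_of_adjDist (by decide) {spoke 0, spoke 1, spoke 2} rfl (by decide) (by decide)

set_option maxRecDepth 10000 in
theorem metricDim_lineGraph_four : metricDim (wheelGraph 4).lineGraph = 3 :=
  metricDim_eq_of_adjDist (by decide) {spoke 0, spoke 1, spoke 2} rfl (by decide) (by decide)

set_option maxRecDepth 10000 in
theorem metricDim_lineGraph_five : metricDim (wheelGraph 5).lineGraph = 4 :=
  metricDim_eq_of_adjDist (by decide) {spoke 0, spoke 1, spoke 2, spoke 3} rfl (by decide)
    (by decide)

end wheelGraph

/-- `dim(L(W_{1,3})) = 3`, `dim(L(W_{1,4})) = 3`, and `dim(L(W_{1,5})) = 4`. -/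
theorem metricDim_lineGraph_wheelGraph_small :
    metricDim (wheelGraph 3).lineGraph = 3 ∧
    metricDim (wheelGraph 4).lineGraph = 3 ∧
    metricDim (wheelGraph 5).lineGraph = 4 :=
  ⟨wheelGraph.metricDim_lineGraph_three, wheelGraph.metricDim_lineGraph_four,
    wheelGraph.metricDim_lineGraph_five⟩
end

section
/- Let B_n = (k_1+1, k_2+1, …, k_n+1) be a bouquet of n ≥ 2 circles with a cut-vertex, where k_n ≥ k_{n−1} ≥ … ≥ k_1 ≥ 2. Then the metric dimension of its line graph satisfies dim(L(B_n)) = 2n − 1. -/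
open SimpleGraph

variable {V : Type*}

/-!
The edges of the `i`-th circle form a cycle of length `k i + 1` in the line graph, and the `2n`
edges at the cut vertex (the gates) form a clique. So two edges of one circle are at their
distance along that cycle, and edges `x`, `y` of different circles are at distance
`d x + 1 + d y`, where `d` is the distance to the nearer gate of the own circle.

The far gate of every circle together with the second edge of all circles but one is a
resolving set of size `2n - 1`. Conversely, a resolving set meets every circle, because the two
gates of a circle are equidistant from everything outside it. Nor can two circles contain just
one landmark each: a landmark halfway round its circle does not separate the two gates of that
circle, and otherwise the gates of the two circles farthest from their landmarks are not
separated.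
-/

namespace SimpleGraph

variable {α β : Type*} {G : SimpleGraph α} {G' : SimpleGraph β}

lemma Hom.edist_le (f : G →g G') (u v : α) : G'.edist (f u) (f v) ≤ G.edist u v := by
  by_cases h : G.Reachable u v
  · obtain ⟨p, hp⟩ := h.exists_walk_length_eq_edist
    calc G'.edist (f u) (f v) ≤ (p.map f).length := SimpleGraph.edist_le _
      _ = G.edist u v := by rw [Walk.length_map, hp]
  · simp [edist_eq_top_of_not_reachable h]

lemma Iso.edist_eq (e : G ≃g G') (u v : α) : G'.edist (e u) (e v) = G.edist u v :=
  le_antisymm (e.toHom.edist_le u v) (by simpa using e.symm.toHom.edist_le (e u) (e v))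

lemma Iso.dist_eq (e : G ≃g G') (u v : α) : G'.dist (e u) (e v) = G.dist u v := by
  rw [dist, dist, e.edist_eq]

lemma Walk.apply_le_apply_add_length {φ : α → ℕ} (hφ : ∀ x y, G.Adj x y → φ y ≤ φ x + 1)
    {u v : α} (p : G.Walk u v) : φ v ≤ φ u + p.length := by
  induction p with
  | nil => simp
  | cons h _ ih =>
    have := hφ _ _ h
    rw [Walk.length_cons]
    omega

lemma dist_eq_of_forall_adj_le {φ : α → ℕ} (hφ : ∀ x y, G.Adj x y → φ y ≤ φ x + 1) {u : α}
    (hu : φ u = 0) (hwalk : ∀ v, ∃ p : G.Walk u v, p.length = φ v) (v : α) :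
    G.dist u v = φ v := by
  obtain ⟨p, hp⟩ := hwalk v
  refine le_antisymm (hp ▸ dist_le p) ?_
  obtain ⟨q, hq⟩ := p.reachable.exists_walk_length_eq_dist
  simpa [hu, hq] using q.apply_le_apply_add_length hφ

end SimpleGraph

section MetricDimension

variable {α β : Type*} {G : SimpleGraph α} {G' : SimpleGraph β}

lemma IsResolvingSet.image (e : G ≃g G') {W : Set α} (hW : IsResolvingSet G W) :
    IsResolvingSet G' (e '' W) := by
  intro u v huv
  obtain ⟨w, hw, hd⟩ := hW (e.symm u) (e.symm v) (e.symm.injective.ne huv)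
  refine ⟨e w, Set.mem_image_of_mem e hw, ?_⟩
  rwa [← e.apply_symm_apply u, ← e.apply_symm_apply v, e.dist_eq, e.dist_eq]

lemma metricDim_congr (e : G ≃g G') : metricDim G = metricDim G' := by
  unfold metricDim
  congr 1
  ext m
  constructor
  · rintro ⟨W, rfl, hW⟩
    exact ⟨e '' W, Set.ncard_image_of_injective W e.injective, hW.image e⟩
  · rintro ⟨W, rfl, hW⟩
    exact ⟨e.symm '' W, Set.ncard_image_of_injective W e.symm.injective, hW.image e.symm⟩

lemma metricDim_eq_of_isResolvingSet {W : Set α} {m : ℕ} (hW : IsResolvingSet G W)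
    (hle : W.ncard ≤ m) (hge : ∀ W', IsResolvingSet G W' → m ≤ W'.ncard) : metricDim G = m := by
  have hmem : W.ncard ∈ {k | ∃ W : Set α, W.ncard = k ∧ IsResolvingSet G W} := ⟨W, rfl, hW⟩
  refine le_antisymm ((Nat.sInf_le hmem).trans hle) (le_csInf ⟨_, hmem⟩ ?_)
  rintro _ ⟨W', rfl, hW'⟩
  exact hge W' hW'

end MetricDimension

open Finset in
lemma Finset.two_mul_card_sub_one_le_card {α ι : Type*} [Fintype ι] [DecidableEq ι]
    (s : Finset α) (f : α → ι) (hne : ∀ i, ∃ x ∈ s, f x = i)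
    (htwo : ∀ i j, i ≠ j → 2 ≤ #{x ∈ s | f x = i} ∨ 2 ≤ #{x ∈ s | f x = j}) :
    2 * Fintype.card ι - 1 ≤ #s := by
  set c : ι → ℕ := fun i => #{x ∈ s | f x = i}
  have hc : ∀ i, 1 ≤ c i := fun i => by
    obtain ⟨x, hx, rfl⟩ := hne i
    exact card_pos.mpr ⟨x, mem_filter.mpr ⟨hx, rfl⟩⟩
  rcases isEmpty_or_nonempty ι with hι | ⟨⟨i₀⟩⟩
  · simp
  obtain ⟨i₁, hi₁⟩ : ∃ i₁, ∀ j, j ≠ i₁ → 2 ≤ c j := by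
    by_cases h : ∃ i, c i < 2
    · obtain ⟨i₁, hi₁⟩ := h
      exact ⟨i₁, fun j hj => (htwo i₁ j hj.symm).resolve_left (not_le.mpr hi₁)⟩
    · simp only [not_exists, not_lt] at h
      exact ⟨i₀, fun j _ => h j⟩
  have : 2 * Fintype.card ι ≤ #s + 1 := calc
    2 * Fintype.card ι = ∑ _i : ι, 2 := by simp [mul_comm]
    _ ≤ ∑ i, (c i + if i = i₁ then 1 else 0) := sum_le_sum fun i _ => by
      by_cases h : i = i₁
      · simp only [h, if_true]
        have := hc i₁
        omega
      · simp only [h, if_false]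
        exact hi₁ i h
    _ = #s + 1 := by
      rw [sum_add_distrib, sum_ite_eq', if_pos (mem_univ _),
        card_eq_sum_card_fiberwise fun x _ => mem_univ (f x)]
  omega

namespace Bouquet

variable {n : ℕ} {k : Fin n → ℕ}

/-- `⟨i, c⟩` stands for the `c`-th edge of the `i`-th circle, `0 ≤ c ≤ k i`; the edges
`⟨i, 0⟩` and `⟨i, k i⟩` are the two edges of that circle at the cut vertex. -/
abbrev CircleEdge (k : Fin n → ℕ) := Σ i : Fin n, Fin (k i + 1)

lemma CircleEdge.eq_iff {x y : CircleEdge k} : x = y ↔ x.1 = y.1 ∧ (x.2 : ℕ) = y.2 := by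
  refine ⟨fun h => h ▸ ⟨rfl, rfl⟩, fun ⟨h₁, h₂⟩ => ?_⟩
  obtain ⟨i, a⟩ := x
  obtain ⟨j, b⟩ := y
  dsimp only at h₁ h₂
  subst h₁
  rw [Fin.ext h₂]

def IsGate (x : CircleEdge k) : Prop := (x.2 : ℕ) = 0 ∨ (x.2 : ℕ) = k x.1

lemma CircleEdge.zero_ne_last {i : Fin n} (hk : 0 < k i) :
    (⟨i, 0⟩ : CircleEdge k) ≠ ⟨i, Fin.last _⟩ := by
  simp [Fin.ext_iff, hk.ne]

/-- The line graph of the bouquet in coordinates: each circle becomes a cycle of length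
`k i + 1` through its two gates, and the `2n` gates form a clique. -/
def lineModel (k : Fin n → ℕ) : SimpleGraph (CircleEdge k) where
  Adj x y := (x.1 = y.1 ∧ ((x.2 : ℕ) + 1 = y.2 ∨ (y.2 : ℕ) + 1 = x.2)) ∨
    (x ≠ y ∧ IsGate x ∧ IsGate y)
  symm := ⟨fun _ _ => by
    rintro (⟨h, h'⟩ | ⟨h, h'⟩)
    · exact Or.inl ⟨h.symm, h'.symm⟩
    · exact Or.inr ⟨Ne.symm h, h'.symm⟩⟩
  loopless := ⟨fun _ => by
    rintro (⟨-, h⟩ | ⟨h, -⟩)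
    · omega
    · exact h rfl⟩

/-- Position `c` on the `i`-th circle of `bouquet n k`: the cut vertex `none` for `c = 0`
(and for `c > k i`), the vertex `some ⟨i, c - 1⟩` for `1 ≤ c ≤ k i`. -/
def circleVertex (k : Fin n → ℕ) (i : Fin n) (c : ℕ) : Option (Σ i : Fin n, Fin (k i)) :=
  if h : 0 < c ∧ c ≤ k i then some ⟨i, ⟨c - 1, by omega⟩⟩ else none

def toSym2 (x : CircleEdge k) : Sym2 (Option (Σ i : Fin n, Fin (k i))) :=
  s(circleVertex k x.1 x.2, circleVertex k x.1 (x.2 + 1))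

lemma circleVertex_eq_some_iff {i j : Fin n} {c : ℕ} {t : Fin (k j)} :
    circleVertex k i c = some ⟨j, t⟩ ↔ i = j ∧ c = t + 1 := by
  unfold circleVertex
  split_ifs with h
  · simp only [Option.some.injEq, Sigma.mk.inj_iff]
    constructor
    · rintro ⟨rfl, ht⟩
      have := congrArg Fin.val (eq_of_heq ht)
      simp only at this
      omega
    · rintro ⟨rfl, rfl⟩
      exact ⟨rfl, heq_of_eq (Fin.ext (by simp))⟩
  · simp only [false_iff, not_and]
    rintro rfl rfl
    exact h ⟨by omega, t.is_lt⟩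

lemma circleVertex_eq_none_iff {i : Fin n} {c : ℕ} :
    circleVertex k i c = none ↔ c = 0 ∨ k i < c := by
  unfold circleVertex
  split_ifs with h <;> simp only [false_iff, true_iff] <;> omega

lemma some_mem_toSym2_iff {x : CircleEdge k} {j : Fin n} {t : Fin (k j)} :
    some ⟨j, t⟩ ∈ toSym2 x ↔ x.1 = j ∧ ((x.2 : ℕ) = t + 1 ∨ (x.2 : ℕ) = t) := by
  simp only [toSym2, Sym2.mem_iff, eq_comm (a := some _), circleVertex_eq_some_iff]
  omega

lemma none_mem_toSym2_iff {x : CircleEdge k} : none ∈ toSym2 x ↔ IsGate x := by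
  simp only [toSym2, Sym2.mem_iff, eq_comm (a := none), circleVertex_eq_none_iff,
    IsGate]
  have := x.2.is_le
  omega

lemma toSym2_eq_mk {x : CircleEdge k} {u v : Option (Σ i : Fin n, Fin (k i))}
    (hu : circleVertex k x.1 x.2 = u) (hv : circleVertex k x.1 (x.2 + 1) = v) :
    toSym2 x = s(u, v) := by
  rw [toSym2, hu, hv]

lemma toSym2_eq_of_val_eq_zero {x : CircleEdge k} (hx : (x.2 : ℕ) = 0) {t : Fin (k x.1)}
    (ht : (t : ℕ) = 0) : toSym2 x = s(none, some ⟨x.1, t⟩) :=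
  toSym2_eq_mk (circleVertex_eq_none_iff.mpr (Or.inl hx))
    (circleVertex_eq_some_iff.mpr ⟨rfl, by omega⟩)

lemma toSym2_eq_of_val_eq {x : CircleEdge k} (hx : (x.2 : ℕ) = k x.1) {t : Fin (k x.1)}
    (ht : (t : ℕ) + 1 = k x.1) : toSym2 x = s(some ⟨x.1, t⟩, none) :=
  toSym2_eq_mk (circleVertex_eq_some_iff.mpr ⟨rfl, by omega⟩)
    (circleVertex_eq_none_iff.mpr (Or.inr (by omega)))

lemma toSym2_eq_of_val_eq_succ {x : CircleEdge k} {s t : Fin (k x.1)}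
    (hs : (x.2 : ℕ) = s + 1) (ht : (t : ℕ) = s + 1) :
    toSym2 x = s(some ⟨x.1, s⟩, some ⟨x.1, t⟩) :=
  toSym2_eq_mk (circleVertex_eq_some_iff.mpr ⟨rfl, hs⟩)
    (circleVertex_eq_some_iff.mpr ⟨rfl, by omega⟩)

lemma toSym2_mem_edgeSet (x : CircleEdge k) (hk : 0 < k x.1) :
    toSym2 x ∈ (bouquet n k).edgeSet := by
  have := x.2.is_le
  rcases Nat.eq_zero_or_pos x.2 with h | h
  · rw [toSym2_eq_of_val_eq_zero (t := ⟨0, hk⟩) h rfl]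
    simp [bouquet]
  rcases eq_or_lt_of_le x.2.is_le with h' | h'
  · rw [toSym2_eq_of_val_eq (t := ⟨k x.1 - 1, by omega⟩) h' (by simp only; omega)]
    simp [bouquet]
  · obtain ⟨s, hs⟩ := Nat.exists_eq_add_one_of_ne_zero h.ne'
    rw [toSym2_eq_of_val_eq_succ (s := ⟨s, by omega⟩) (t := ⟨s + 1, by omega⟩) hs rfl]
    simp [bouquet, Fin.ext_iff]

lemma toSym2_injective (hk : ∀ i, 2 ≤ k i) :
    Function.Injective (toSym2 : CircleEdge k → _) := by
  rintro ⟨i, c⟩ ⟨j, b⟩ h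
  have hki := hk i
  have hc := c.is_le
  have hb := b.is_le
  have hwit : some ⟨i, ⟨min c (k i - 1), by omega⟩⟩ ∈ toSym2 (⟨i, c⟩ : CircleEdge k) := by
    rw [some_mem_toSym2_iff]
    simp only [true_and]
    omega
  rw [h, some_mem_toSym2_iff] at hwit
  obtain ⟨hij, hcb⟩ := hwit
  dsimp only at hij hcb
  subst j
  have hwit' : some ⟨i, ⟨min b (k i - 1), by omega⟩⟩ ∈ toSym2 (⟨i, c⟩ : CircleEdge k) := by
    rw [h, some_mem_toSym2_iff]
    simp only [true_and]
    omega
  have hgate : IsGate (⟨i, c⟩ : CircleEdge k) ↔ IsGate (⟨i, b⟩ : CircleEdge k) := by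
    rw [← none_mem_toSym2_iff, ← none_mem_toSym2_iff, h]
  rw [some_mem_toSym2_iff] at hwit'
  simp only [IsGate] at hgate hwit'
  refine CircleEdge.eq_iff.mpr ⟨rfl, ?_⟩
  dsimp only at hcb hwit' ⊢
  omega

lemma exists_toSym2_eq {e : Sym2 (Option (Σ i : Fin n, Fin (k i)))}
    (he : e ∈ (bouquet n k).edgeSet) : ∃ x : CircleEdge k, toSym2 x = e := by
  induction e using Sym2.ind with
  | _ u v =>
  rw [mem_edgeSet] at he
  rcases u with _ | ⟨i, s⟩ <;> rcases v with _ | ⟨j, t⟩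
  · exact absurd he (bouquet n k).irrefl
  · simp only [bouquet, fromRel_adj] at he
    rcases he.2 with (h | h) | h
    · exact ⟨⟨j, 0⟩, toSym2_eq_of_val_eq_zero rfl h⟩
    · exact ⟨⟨j, Fin.last _⟩, (toSym2_eq_of_val_eq rfl (by dsimp only; omega)).trans Sym2.eq_swap⟩
    · exact h.elim
  · simp only [bouquet, fromRel_adj] at he
    rcases he.2 with h | (h | h)
    · exact h.elim
    · exact ⟨⟨i, 0⟩, (toSym2_eq_of_val_eq_zero rfl h).trans Sym2.eq_swap⟩
    · exact ⟨⟨i, Fin.last _⟩, toSym2_eq_of_val_eq rfl (by dsimp only; omega)⟩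
  · simp only [bouquet, fromRel_adj] at he
    rcases he.2 with ⟨rfl, h⟩ | ⟨rfl, h⟩
    · exact ⟨⟨i, ⟨s + 1, by omega⟩⟩, toSym2_eq_of_val_eq_succ rfl h⟩
    · exact ⟨⟨j, ⟨t + 1, by omega⟩⟩, (toSym2_eq_of_val_eq_succ rfl h).trans Sym2.eq_swap⟩

def toEdge (hk : ∀ i, 2 ≤ k i) (x : CircleEdge k) : (bouquet n k).edgeSet :=
  ⟨toSym2 x, toSym2_mem_edgeSet x (two_pos.trans_le (hk x.1))⟩

lemma toEdge_bijective (hk : ∀ i, 2 ≤ k i) : Function.Bijective (toEdge hk) :=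
  ⟨fun _ _ h => toSym2_injective hk (congrArg Subtype.val h), fun ⟨_, he⟩ =>
    (exists_toSym2_eq he).imp fun _ hx => Subtype.ext hx⟩

lemma lineGraph_adj_toEdge_iff (hk : ∀ i, 2 ≤ k i) {x y : CircleEdge k} :
    (bouquet n k).lineGraph.Adj (toEdge hk x) (toEdge hk y) ↔ (lineModel k).Adj x y := by
  rw [lineGraph_adj_iff_exists, (toEdge_bijective hk).injective.ne_iff]
  obtain ⟨i, a⟩ := x
  obtain ⟨j, b⟩ := y
  constructor
  · rintro ⟨hne, _ | ⟨l, t⟩, hx, hy⟩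
    · exact Or.inr ⟨hne, none_mem_toSym2_iff.mp hx, none_mem_toSym2_iff.mp hy⟩
    · rw [toEdge, some_mem_toSym2_iff] at hx
      rw [toEdge, some_mem_toSym2_iff] at hy
      obtain ⟨rfl, hx⟩ := hx
      obtain ⟨rfl, hy⟩ := hy
      rw [Ne, CircleEdge.eq_iff] at hne
      exact Or.inl ⟨rfl, by dsimp only at hx hy hne ⊢; omega⟩
  · rintro (⟨hij, hab⟩ | ⟨hne, hx, hy⟩)
    · dsimp only at hij hab
      subst hij
      have := b.is_le
      refine ⟨by simp only [Ne, CircleEdge.eq_iff, true_and]; omega,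
        some ⟨i, ⟨min a b, by omega⟩⟩, ?_, ?_⟩ <;>
      · simp only [toEdge, some_mem_toSym2_iff, true_and]
        omega
    · exact ⟨hne, none, none_mem_toSym2_iff.mpr hx, none_mem_toSym2_iff.mpr hy⟩

noncomputable def lineModelIso (hk : ∀ i, 2 ≤ k i) : lineModel k ≃g (bouquet n k).lineGraph where
  toEquiv := Equiv.ofBijective _ (toEdge_bijective hk)
  map_rel_iff' := lineGraph_adj_toEdge_iff hk

lemma lineModel_adj_of_succ (i : Fin n) {a b : Fin (k i + 1)} (h : (a : ℕ) + 1 = b) :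
    (lineModel k).Adj ⟨i, a⟩ ⟨i, b⟩ :=
  Or.inl ⟨rfl, Or.inl h⟩

lemma lineModel_adj_of_isGate {x y : CircleEdge k} (hxy : x ≠ y) (hx : IsGate x)
    (hy : IsGate y) : (lineModel k).Adj x y :=
  Or.inr ⟨hxy, hx, hy⟩

lemma exists_walk_length_eq_sub (i : Fin n) {a b : Fin (k i + 1)} (hab : a ≤ b) :
    ∃ p : (lineModel k).Walk ⟨i, a⟩ ⟨i, b⟩, p.length = b - a := by
  obtain ⟨d, hd⟩ : ∃ d, (b : ℕ) = a + d := Nat.exists_eq_add_of_le hab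
  induction d generalizing a with
  | zero =>
    obtain rfl : a = b := Fin.ext (by omega)
    exact ⟨.nil, by simp⟩
  | succ d ih =>
    obtain ⟨p, hp⟩ := ih (a := ⟨a + 1, by omega⟩) (Fin.mk_le_of_le_val (by omega))
      (by simp only; omega)
    exact ⟨.cons (lineModel_adj_of_succ i rfl) p, by simp only [Walk.length_cons, hp]; omega⟩

lemma exists_walk_length_eq_dist (i : Fin n) (a b : Fin (k i + 1)) :
    ∃ p : (lineModel k).Walk ⟨i, a⟩ ⟨i, b⟩, p.length = Nat.dist a b := by
  rcases le_total a b with hab | hba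
  · obtain ⟨p, hp⟩ := exists_walk_length_eq_sub i hab
    exact ⟨p, by rw [hp, Nat.dist]; omega⟩
  · obtain ⟨p, hp⟩ := exists_walk_length_eq_sub i hba
    exact ⟨p.reverse, by rw [Walk.length_reverse, hp, Nat.dist]; omega⟩

def gateDist (x : CircleEdge k) : ℕ := min x.2 (k x.1 - x.2)

def lineDist (x y : CircleEdge k) : ℕ :=
  if x.1 = y.1 then min (Nat.dist x.2 y.2) (k x.1 + 1 - Nat.dist x.2 y.2)
  else gateDist x + 1 + gateDist y

lemma lineDist_le_of_adj (x : CircleEdge k) {y z : CircleEdge k} (h : (lineModel k).Adj y z) :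
    lineDist x z ≤ lineDist x y + 1 := by
  obtain ⟨i, a⟩ := x
  obtain ⟨j, b⟩ := y
  obtain ⟨l, c⟩ := z
  have := a.is_le
  have := b.is_le
  have := c.is_le
  rcases h with ⟨hjl, hbc⟩ | ⟨-, hb, hc⟩
  · dsimp only at hjl hbc
    subst hjl
    by_cases hij : i = j
    · subst hij
      simp only [lineDist, gateDist, Nat.dist, if_true]
      omega
    · simp only [lineDist, gateDist, if_neg hij]
      omega
  · simp only [IsGate] at hb hc
    by_cases hij : i = j <;> by_cases hil : i = l
    · subst hij hil
      simp only [lineDist, Nat.dist, if_true]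
      omega
    · subst hij
      simp only [lineDist, gateDist, Nat.dist, if_true, if_neg hil]
      omega
    · subst hil
      simp only [lineDist, gateDist, Nat.dist, if_true, if_neg hij]
      omega
    · simp only [lineDist, gateDist, if_neg hij, if_neg hil]
      omega

lemma exists_walk_through_gates {i j : Fin n} (a g : Fin (k i + 1)) (b g' : Fin (k j + 1))
    (hg : IsGate ⟨i, g⟩) (hg' : IsGate ⟨j, g'⟩) (hne : (⟨i, g⟩ : CircleEdge k) ≠ ⟨j, g'⟩) :
    ∃ p : (lineModel k).Walk ⟨i, a⟩ ⟨j, b⟩, p.length = Nat.dist a g + 1 + Nat.dist g' b := by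
  obtain ⟨p, hp⟩ := exists_walk_length_eq_dist i a g
  obtain ⟨q, hq⟩ := exists_walk_length_eq_dist j g' b
  refine ⟨p.append (.cons (lineModel_adj_of_isGate hne hg hg') q), ?_⟩
  rw [Walk.length_append, Walk.length_cons, hp, hq]
  ring

lemma exists_isGate_dist_eq_gateDist (x : CircleEdge k) :
    ∃ g : Fin (k x.1 + 1), IsGate ⟨x.1, g⟩ ∧ Nat.dist x.2 g = gateDist x := by
  have := x.2.is_le
  by_cases h : (x.2 : ℕ) ≤ k x.1 - x.2
  · exact ⟨0, Or.inl rfl, by simp only [Nat.dist, gateDist, Fin.val_zero]; omega⟩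
  · exact ⟨Fin.last _, Or.inr rfl, by simp only [Nat.dist, gateDist, Fin.val_last]; omega⟩

lemma exists_walk_length_eq_lineDist (x y : CircleEdge k) :
    ∃ p : (lineModel k).Walk x y, p.length = lineDist x y := by
  obtain ⟨i, a⟩ := x
  obtain ⟨j, b⟩ := y
  by_cases hij : i = j
  · subst hij
    simp only [lineDist, if_true]
    have := a.is_le
    have := b.is_le
    by_cases harc : Nat.dist a b ≤ k i + 1 - Nat.dist a b
    · rw [min_eq_left harc]
      exact exists_walk_length_eq_dist i a b
    have hk : 0 < k i := by simp only [Nat.dist] at harc; omega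
    have hne := CircleEdge.zero_ne_last hk
    rcases le_total a b with hab | hba
    · obtain ⟨p, hp⟩ := exists_walk_through_gates a 0 b (Fin.last _) (Or.inl rfl) (Or.inr rfl) hne
      exact ⟨p, by simp only [hp, Nat.dist, Fin.val_zero, Fin.val_last] at harc ⊢; omega⟩
    · obtain ⟨p, hp⟩ := exists_walk_through_gates a (Fin.last _) b 0 (Or.inr rfl) (Or.inl rfl)
        hne.symm
      exact ⟨p, by simp only [hp, Nat.dist, Fin.val_zero, Fin.val_last] at harc ⊢; omega⟩
  · obtain ⟨g, hg, hga⟩ := exists_isGate_dist_eq_gateDist ⟨i, a⟩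
    obtain ⟨g', hg', hgb⟩ := exists_isGate_dist_eq_gateDist ⟨j, b⟩
    obtain ⟨p, hp⟩ := exists_walk_through_gates a g b g' hg hg'
      (fun h => hij (CircleEdge.eq_iff.mp h).1)
    refine ⟨p, ?_⟩
    rw [hp, lineDist, if_neg hij, ← hga, ← hgb, Nat.dist_comm g' b]

lemma dist_lineModel (x y : CircleEdge k) : (lineModel k).dist x y = lineDist x y :=
  dist_eq_of_forall_adj_le (fun _ _ => lineDist_le_of_adj x) (by simp [lineDist])
    (exists_walk_length_eq_lineDist x) y

lemma lineDist_of_isGate {g x : CircleEdge k} (hg : IsGate g) (h : g.1 ≠ x.1) :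
    lineDist g x = gateDist x + 1 := by
  rcases hg with hg | hg <;>
  · simp only [lineDist, gateDist, if_neg h, hg]
    omega

def landmarks (k : Fin n → ℕ) (i₀ : Fin n) : Set (CircleEdge k) :=
  {x | (x.2 : ℕ) = k x.1 ∨ (x.1 ≠ i₀ ∧ (x.2 : ℕ) = 1)}

lemma ncard_landmarks_le (i₀ : Fin n) : (landmarks k i₀).ncard ≤ 2 * n - 1 := by
  have hgates : {x : CircleEdge k | (x.2 : ℕ) = k x.1}.ncard ≤ n := by
    refine (Set.ncard_le_ncard_of_injOn Sigma.fst (fun _ _ => Set.mem_univ _) ?_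
      (Set.toFinite _)).trans (by simp)
    intro x hx y hy h
    exact CircleEdge.eq_iff.mpr ⟨h, by rw [hx, hy, h]⟩
  have hones : {x : CircleEdge k | x.1 ≠ i₀ ∧ (x.2 : ℕ) = 1}.ncard ≤ n - 1 := by
    refine (Set.ncard_le_ncard_of_injOn (t := {i₀}ᶜ) Sigma.fst (fun x hx => hx.1) ?_
      (Set.toFinite _)).trans (by rw [Set.ncard_compl, Set.ncard_singleton, Nat.card_fin])
    intro x hx y hy h
    exact CircleEdge.eq_iff.mpr ⟨h, hx.2.trans hy.2.symm⟩
  have := i₀.pos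
  calc (landmarks k i₀).ncard
      ≤ {x : CircleEdge k | (x.2 : ℕ) = k x.1}.ncard
        + {x : CircleEdge k | x.1 ≠ i₀ ∧ (x.2 : ℕ) = 1}.ncard := Set.ncard_union_le _ _
    _ ≤ 2 * n - 1 := by omega

lemma isResolvingSet_landmarks (hn : 2 ≤ n) (hk : ∀ i, 2 ≤ k i) (i₀ : Fin n) :
    IsResolvingSet (lineModel k) (landmarks k i₀) := by
  intro u v huv
  by_contra! hsame
  have hdist : ∀ w ∈ landmarks k i₀, lineDist w u = lineDist w v := fun w hw => by
    rw [← dist_lineModel, ← dist_lineModel, dist_comm, hsame w hw, dist_comm]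
  have far (i : Fin n) : (⟨i, Fin.last (k i)⟩ : CircleEdge k) ∈ landmarks k i₀ := Or.inl rfl
  have one (i : Fin n) (hi : i ≠ i₀) : (⟨i, ⟨1, by have := hk i; omega⟩⟩ : CircleEdge k) ∈
      landmarks k i₀ := Or.inr ⟨hi, rfl⟩
  obtain ⟨l, c⟩ := u
  obtain ⟨l', c'⟩ := v
  have := c.is_le
  have := c'.is_le
  have := hk l
  have := hk l'
  by_cases hll : l = l'
  · subst hll
    have : Nontrivial (Fin n) := Fin.nontrivial_iff_two_le.mpr hn
    obtain ⟨j, hj⟩ := exists_ne l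
    have h₁ := hdist _ (far l)
    have h₂ := hdist _ (far j)
    simp only [lineDist, gateDist, Nat.dist, if_true, if_neg hj, Fin.val_last] at h₁ h₂
    exact huv (CircleEdge.eq_iff.mpr ⟨rfl, by dsimp only; omega⟩)
  · have h₁ := hdist _ (far l)
    have h₂ := hdist _ (far l')
    simp only [lineDist, gateDist, Nat.dist, if_true, if_neg hll, if_neg (Ne.symm hll),
      Fin.val_last] at h₁ h₂
    by_cases hl : l = i₀
    · have h₃ := hdist _ (one l' (hl ▸ Ne.symm hll))
      simp only [lineDist, gateDist, Nat.dist, if_true, if_neg (Ne.symm hll)] at h₃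
      omega
    · have h₃ := hdist _ (one l hl)
      simp only [lineDist, gateDist, Nat.dist, if_true, if_neg hll] at h₃
      omega

lemma exists_isGate_lineDist_eq (p : CircleEdge k) (hp : 2 * (p.2 : ℕ) ≠ k p.1) :
    ∃ g : CircleEdge k, g.1 = p.1 ∧ IsGate g ∧ lineDist g p = gateDist p + 1 := by
  have := p.2.is_le
  rcases Nat.lt_or_gt_of_ne hp with h | h
  · refine ⟨⟨p.1, Fin.last _⟩, rfl, Or.inr rfl, ?_⟩
    simp only [lineDist, gateDist, Nat.dist, Fin.val_last, if_true]
    omega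
  · refine ⟨⟨p.1, 0⟩, rfl, Or.inl rfl, ?_⟩
    simp only [lineDist, gateDist, Nat.dist, Fin.val_zero, if_true]
    omega

variable {W : Set (CircleEdge k)}

lemma exists_mem_of_isResolvingSet (hk : ∀ i, 0 < k i) (hW : IsResolvingSet (lineModel k) W)
    (i : Fin n) : ∃ x ∈ W, x.1 = i := by
  by_contra! hi
  obtain ⟨w, hw, hd⟩ := hW _ _ (CircleEdge.zero_ne_last (hk i))
  rw [dist_lineModel, dist_lineModel, lineDist_of_isGate (Or.inl rfl) (hi w hw).symm,
    lineDist_of_isGate (Or.inr rfl) (hi w hw).symm] at hd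
  exact hd rfl

lemma nontrivial_or_nontrivial_of_isResolvingSet (hk : ∀ i, 0 < k i)
    (hW : IsResolvingSet (lineModel k) W) {i j : Fin n} (hij : i ≠ j) :
    {x ∈ W | x.1 = i}.Nontrivial ∨ {x ∈ W | x.1 = j}.Nontrivial := by
  by_contra! h
  obtain ⟨p, hpW, rfl⟩ := exists_mem_of_isResolvingSet hk hW i
  obtain ⟨q, hqW, rfl⟩ := exists_mem_of_isResolvingSet hk hW j
  have hp : ∀ x ∈ W, x.1 = p.1 → x = p := fun x hx hx₁ => h.1 ⟨hx, hx₁⟩ ⟨hpW, rfl⟩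
  have hq : ∀ x ∈ W, x.1 = q.1 → x = q := fun x hx hx₁ => h.2 ⟨hx, hx₁⟩ ⟨hqW, rfl⟩
  have hmiddle (r : CircleEdge k) (hr : ∀ x ∈ W, x.1 = r.1 → x = r)
      (hrc : 2 * (r.2 : ℕ) = k r.1) : False := by
    obtain ⟨w, hw, hd⟩ := hW _ _ (CircleEdge.zero_ne_last (hk r.1))
    rw [dist_lineModel, dist_lineModel] at hd
    apply hd
    by_cases hw₁ : w.1 = r.1
    · rw [hr w hw hw₁]
      simp only [lineDist, Nat.dist, Fin.val_zero, Fin.val_last, if_true]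
      omega
    · rw [lineDist_of_isGate (g := ⟨r.1, 0⟩) (Or.inl rfl) (Ne.symm hw₁),
        lineDist_of_isGate (g := ⟨r.1, Fin.last _⟩) (Or.inr rfl) (Ne.symm hw₁)]
  by_cases hpc : 2 * (p.2 : ℕ) = k p.1
  · exact hmiddle p hp hpc
  by_cases hqc : 2 * (q.2 : ℕ) = k q.1
  · exact hmiddle q hq hqc
  obtain ⟨g, hg₁, hg, hgp⟩ := exists_isGate_lineDist_eq p hpc
  obtain ⟨g', hg'₁, hg', hgq⟩ := exists_isGate_lineDist_eq q hqc
  obtain ⟨w, hw, hd⟩ := hW g g' fun h => hij (hg₁ ▸ hg'₁ ▸ congrArg Sigma.fst h)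
  rw [dist_lineModel, dist_lineModel] at hd
  apply hd
  by_cases hwp : w.1 = p.1
  · rw [hp w hw hwp, hgp, lineDist_of_isGate hg' (hg'₁ ▸ Ne.symm hij)]
  by_cases hwq : w.1 = q.1
  · rw [hq w hw hwq, hgq, lineDist_of_isGate hg (hg₁ ▸ hij)]
  rw [lineDist_of_isGate hg (hg₁ ▸ Ne.symm hwp), lineDist_of_isGate hg' (hg'₁ ▸ Ne.symm hwq)]

lemma two_mul_sub_one_le_ncard_of_isResolvingSet (hk : ∀ i, 0 < k i) (hW : IsResolvingSet (lineModel k) W) :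
    2 * n - 1 ≤ W.ncard := by
  classical
  obtain ⟨s, rfl⟩ := W.toFinite.exists_finset_coe
  rw [Set.ncard_coe_finset]
  simpa using Finset.two_mul_card_sub_one_le_card s Sigma.fst
    (exists_mem_of_isResolvingSet hk hW) fun i j hij => by
      refine (nontrivial_or_nontrivial_of_isResolvingSet hk hW hij).imp ?_ ?_ <;>
      · intro h
        exact Finset.one_lt_card_iff_nontrivial.mpr (by rwa [Finset.Nontrivial, Finset.coe_filter])

end Bouquet

theorem metricDim_lineGraph_bouquet_general (n : ℕ) (hn : 2 ≤ n) (k : Fin n → ℕ)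
    (hk : ∀ i, 2 ≤ k i) :
    metricDim (bouquet n k).lineGraph = 2 * n - 1 := by
  rw [← metricDim_congr (Bouquet.lineModelIso hk)]
  have i₀ : Fin n := ⟨0, by omega⟩
  exact metricDim_eq_of_isResolvingSet (Bouquet.isResolvingSet_landmarks hn hk i₀)
    (Bouquet.ncard_landmarks_le i₀)
    fun W hW => Bouquet.two_mul_sub_one_le_ncard_of_isResolvingSet (fun i => two_pos.trans_le (hk i)) hW

/-- For a bouquet `B_n` of `n ≥ 2` circles of lengths `k i + 1` with
`k n ≥ … ≥ k 1 ≥ 2`, the metric dimension of its line graph is `2n - 1`. -/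
theorem metricDim_lineGraph_bouquet (n : ℕ) (hn : 2 ≤ n) (k : Fin n → ℕ)
    (hk : ∀ i, 2 ≤ k i) (hmono : Monotone k) :
    metricDim (bouquet n k).lineGraph = 2 * n - 1 :=
  metricDim_lineGraph_bouquet_general n hn k hk
end

section
/- For any connected graph G of order n ≥ 2 with at least one edge, the zero forcing number of its line graph satisfies Z(L(G)) ≥ Δ(G) − 1, where Δ(G) is the maximum degree of G. -/
open SimpleGraph

variable {V : Type*}

/-!
Call a black vertex *active* if it still has a white neighbour. A step of the colour-change
rule does not increase the number of active vertices: an active vertex that just turned black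
is charged to the vertex that forced it, which stops being active. Hence at every stage there
are at most `|S|` active vertices. For a clique `K`, look at the last stage at which some
`w ∈ K` is still white: all black vertices of `K` are active, and every other white vertex of
`K` is forced at the next step by a distinct active vertex outside `K`, so `|K| - 1 ≤ |S|`.
The edges at a vertex of maximum degree form such a clique in the line graph.
-/

def activeSet (G : SimpleGraph V) (B : Set V) : Set V :=
  {u ∈ B | ∃ w, G.Adj u w ∧ w ∉ B}

section ZeroForcing

variable {G : SimpleGraph V} {B X K S : Set V}

theorem activeSet_subset : activeSet G B ⊆ B := fun _ hu => hu.1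

theorem subset_zfStep : B ⊆ zfStep G B := Set.subset_union_left

/-- Send each black vertex of `X` to itself and each newly forced one to its forcer; the
hypothesis on `X ∩ B` rules out that a black vertex of `X` is the forcer of another. -/
theorem ncard_le_ncard_activeSet [Finite V] (hX : X ⊆ zfStep G B)
    (hXB : ∀ x ∈ X ∩ B, ∃ w, G.Adj x w ∧ w ∉ B ∧ w ∉ X) :
    X.ncard ≤ (activeSet G B).ncard := by
  have hforcer : ∀ x, ∃ u, x ∈ X → x ∉ B →
      u ∈ B ∧ G.Adj u x ∧ ∀ w, G.Adj u w → w ∉ B → w = x := fun x => by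
    by_cases hx : x ∈ X ∧ x ∉ B
    · obtain ⟨u, hu⟩ := (hX hx.1).resolve_left hx.2
      exact ⟨u, fun _ _ => hu⟩
    · exact ⟨x, fun h h' => absurd ⟨h, h'⟩ hx⟩
  choose u hu using hforcer
  classical
  let F : V → V := fun x => if x ∈ B then x else u x
  refine Set.ncard_le_ncard_of_injOn F (fun x hx => ?_) (fun x hx y hy hxy => ?_) (Set.toFinite _)
  · by_cases hxB : x ∈ B
    · obtain ⟨w, hxw, hwB, -⟩ := hXB x ⟨hx, hxB⟩
      simpa only [F, if_pos hxB] using ⟨hxB, w, hxw, hwB⟩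
    · obtain ⟨huB, hux, -⟩ := hu x hx hxB
      simpa only [F, if_neg hxB] using ⟨huB, x, hux, hxB⟩
  · have forcer_ne : ∀ a ∈ X, a ∈ B → ∀ b ∈ X, b ∉ B → a ≠ u b := by
      rintro a ha haB b hb hbB rfl
      obtain ⟨w, haw, hwB, hwX⟩ := hXB _ ⟨ha, haB⟩
      exact hwX ((hu b hb hbB).2.2 w haw hwB ▸ hb)
    by_cases hxB : x ∈ B <;> by_cases hyB : y ∈ B <;> simp only [F, hxB, hyB, if_true,
      if_false] at hxy
    · exact hxy
    · exact absurd hxy (forcer_ne x hx hxB y hy hyB)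
    · exact absurd hxy.symm (forcer_ne y hy hyB x hx hxB)
    · obtain ⟨-, hux, -⟩ := hu x hx hxB
      exact (hu y hy hyB).2.2 x (hxy ▸ hux) hxB

theorem ncard_activeSet_zfStep_le [Finite V] :
    (activeSet G (zfStep G B)).ncard ≤ (activeSet G B).ncard :=
  ncard_le_ncard_activeSet activeSet_subset fun _ hx =>
    let ⟨w, hxw, hw⟩ := hx.1.2
    ⟨w, hxw, fun hwB => hw (subset_zfStep hwB), fun hwX => hw (activeSet_subset hwX)⟩

theorem ncard_activeSet_iterate_zfStep_le [Finite V] (n : ℕ) :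
    (activeSet G ((zfStep G)^[n] S)).ncard ≤ S.ncard := by
  induction n with
  | zero => exact Set.ncard_le_ncard activeSet_subset
  | succ n ih =>
    rw [Function.iterate_succ_apply']
    exact ncard_activeSet_zfStep_le.trans ih

theorem ncard_le_ncard_activeSet_add_one_of_isClique [Finite V] {w : V} (hK : G.IsClique K)
    (hKB : K ⊆ zfStep G B) (hw : w ∈ K) (hwB : w ∉ B) :
    K.ncard ≤ (activeSet G B).ncard + 1 := by
  rw [← Set.ncard_sdiff_singleton_add_one hw]
  refine Nat.add_le_add_right (ncard_le_ncard_activeSet (Set.sdiff_subset.trans hKB) ?_) 1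
  rintro x ⟨⟨hxK, hxw⟩, hxB⟩
  exact ⟨w, hK hxK hw hxw, hwB, fun h => h.2 rfl⟩

theorem IsZeroForcingSet.ncard_le_of_isClique [Finite V] (hS : IsZeroForcingSet G S)
    (hK : G.IsClique K) : K.ncard ≤ S.ncard + 1 := by
  obtain ⟨m, hm⟩ := hS
  suffices ∀ n, K ⊆ (zfStep G)^[n] S → K.ncard ≤ S.ncard + 1 from this m (hm ▸ Set.subset_univ K)
  intro n
  induction n with
  | zero => exact fun hKS => (Set.ncard_le_ncard hKS).trans (Nat.le_succ _)
  | succ n ih =>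
    intro hKB
    by_cases hKB' : K ⊆ (zfStep G)^[n] S
    · exact ih hKB'
    obtain ⟨w, hwK, hwB⟩ := Set.not_subset.mp hKB'
    rw [Function.iterate_succ_apply'] at hKB
    exact (ncard_le_ncard_activeSet_add_one_of_isClique hK hKB hwK hwB).trans
      (Nat.add_le_add_right (ncard_activeSet_iterate_zfStep_le n) 1)

theorem exists_isZeroForcingSet_ncard_eq_zeroForcingNum (G : SimpleGraph V) :
    ∃ S, S.ncard = zeroForcingNum G ∧ IsZeroForcingSet G S :=
  Nat.sInf_mem (s := {k | ∃ S : Set V, S.ncard = k ∧ IsZeroForcingSet G S})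
    ⟨_, Set.univ, rfl, 0, rfl⟩

end ZeroForcing

theorem isClique_lineGraph_incidenceSet (G : SimpleGraph V) (v : V) :
    G.lineGraph.IsClique (Subtype.val ⁻¹' G.incidenceSet v) :=
  fun _ he₁ _ he₂ hne => G.lineGraph_adj_iff_exists.mpr ⟨hne, v, he₁.2, he₂.2⟩

theorem ncard_preimage_incidenceSet [Fintype V] (G : SimpleGraph V) [DecidableRel G.Adj] (v : V) :
    (Subtype.val ⁻¹' G.incidenceSet v : Set G.edgeSet).ncard = G.degree v := by
  classical
  rw [Set.ncard_preimage_of_injective_subset_range Subtype.val_injective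
      (by simpa using G.incidenceSet_subset v), ← Nat.card_coe_set_eq, Nat.card_eq_fintype_card,
    card_incidenceSet_eq_degree]

theorem maxDegree_sub_one_le_zeroForcingNum_lineGraph_general {V : Type*} [Fintype V]
    (G : SimpleGraph V) [DecidableRel G.Adj] :
    G.maxDegree - 1 ≤ zeroForcingNum G.lineGraph := by
  obtain ⟨S, hcard, hS⟩ := exists_isZeroForcingSet_ncard_eq_zeroForcingNum G.lineGraph
  refine Nat.sub_le_iff_le_add.mpr (G.maxDegree_le_of_forall_degree_le _ fun v => ?_)
  rw [← ncard_preimage_incidenceSet G v, ← hcard]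
  exact hS.ncard_le_of_isClique (isClique_lineGraph_incidenceSet G v)

/-- For any connected graph `G` of order `n ≥ 2` with at least one edge,
`Z(L(G)) ≥ Δ(G) - 1`. -/
theorem maxDegree_sub_one_le_zeroForcingNum_lineGraph {V : Type*} [Fintype V]
    [DecidableEq V] (G : SimpleGraph V) [DecidableRel G.Adj]
    (hn : 2 ≤ Fintype.card V) (hconn : G.Connected) (hE : G.edgeSet.Nonempty) :
    G.maxDegree - 1 ≤ zeroForcingNum G.lineGraph :=
  maxDegree_sub_one_le_zeroForcingNum_lineGraph_general G
end

section
/- For any connected graph G of order n ≥ 2, the zero forcing number of its line graph satisfies Z(L(G)) ≤ |E(G)| − (δ(G) − 1), where δ(G) is the minimum degree of G and |E(G)| is the number of edges of G. -/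
open SimpleGraph

variable {V : Type*}

/-! Let `v` have minimum degree `δ` and let `A` be a set of `δ - 1` neighbours of `v`. Colour
every edge black except the edges `va`, `a ∈ A`. Any white edge `va` can be forced: since
`deg a ≥ δ > |A|`, the vertex `a` has a neighbour `w` outside `{v} ∪ (A \ {a})`, and then `va` is
the only white edge meeting the black edge `aw`. Removing `a` from `A` and repeating, the
`|E| - (δ - 1)` black edges form a zero forcing set of `L(G)`. -/

lemma subset_zfStep_s4 (G : SimpleGraph V) (S : Set V) : S ⊆ zfStep G S :=
  Set.subset_union_left

lemma zfStep_mono (G : SimpleGraph V) : Monotone (zfStep G) := by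
  rintro S T hST x (hx | ⟨u, hu, hadj, huniq⟩)
  · exact Or.inl (hST hx)
  · exact Or.inr ⟨u, hST hu, hadj, fun w hw hwT => huniq w hw fun hwS => hwT (hST hwS)⟩

lemma isZeroForcingSet_univ (G : SimpleGraph V) : IsZeroForcingSet G Set.univ :=
  ⟨0, rfl⟩

lemma IsZeroForcingSet.of_subset_zfStep {G : SimpleGraph V} {S T : Set V}
    (hT : IsZeroForcingSet G T) (hTS : T ⊆ zfStep G S) : IsZeroForcingSet G S := by
  obtain ⟨m, hm⟩ := hT
  refine ⟨m + 1, Set.eq_univ_of_univ_subset ?_⟩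
  rw [← hm, Function.iterate_succ_apply]
  exact (zfStep_mono G).iterate m hTS

lemma zeroForcingNum_le_ncard {G : SimpleGraph V} {S : Set V} (hS : IsZeroForcingSet G S) :
    zeroForcingNum G ≤ S.ncard :=
  Nat.sInf_le ⟨S, rfl, hS⟩

namespace SimpleGraph

open Finset

variable {G : SimpleGraph V}

lemma mk_mem_zfStep_lineGraph {v a w : V} {A : Set V} (hva : G.Adj v a) (haw : G.Adj a w)
    (hwv : w ≠ v) (hwA : w ∉ A) :
    (⟨s(v, a), hva⟩ : G.edgeSet) ∈ zfStep G.lineGraph {e | (e : Sym2 V) ∉ (s(v, ·)) '' A} := by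
  have hav : a ≠ v := hva.ne'
  refine Or.inr ⟨⟨s(a, w), haw⟩, ?_, ?_, ?_⟩
  · rintro ⟨b, -, hb⟩
    rcases Sym2.eq_iff.mp hb with ⟨h, -⟩ | ⟨h, -⟩
    exacts [hav h.symm, hwv h.symm]
  · refine lineGraph_adj_iff_exists.mpr
      ⟨fun h => ?_, a, Sym2.mem_mk_left a w, Sym2.mem_mk_right v a⟩
    rcases Sym2.eq_iff.mp (congrArg Subtype.val h) with ⟨h, -⟩ | ⟨-, h⟩
    exacts [hav h, hwv h]
  · rintro ⟨f, hf⟩ hadj hfA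
    obtain ⟨b, hbA, rfl⟩ : ∃ b ∈ A, s(v, b) = f := by simpa using hfA
    obtain ⟨x, hx, hxb⟩ := (lineGraph_adj_iff_exists.mp hadj).2
    rcases Sym2.mem_iff.mp hx with rfl | rfl <;> rcases Sym2.mem_iff.mp hxb with h | rfl
    · exact absurd h hav
    · rfl
    · exact absurd h hwv
    · exact absurd hbA hwA

theorem isZeroForcingSet_lineGraph_compl_star [G.LocallyFinite] {v : V} {A : Finset V}
    (hA : ∀ a ∈ A, G.Adj v a) (hdeg : ∀ a ∈ A, #A < G.degree a) :
    IsZeroForcingSet G.lineGraph {e | (e : Sym2 V) ∉ (s(v, ·)) '' (A : Set V)} := by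
  classical
  induction A using Finset.induction_on with
  | empty => simpa using isZeroForcingSet_univ G.lineGraph
  | insert a A haA ih =>
    have hva := hA a (mem_insert_self a A)
    obtain ⟨w, hw, hwA⟩ : ∃ w ∈ G.neighborFinset a, w ∉ insert v A :=
      exists_mem_notMem_of_card_lt_card <| calc
        #(insert v A) ≤ #A + 1 := card_insert_le v A
        _ = #(insert a A) := (card_insert_of_notMem haA).symm
        _ < G.degree a := hdeg a (mem_insert_self a A)
        _ = #(G.neighborFinset a) := (card_neighborFinset_eq_degree G a).symm
    rw [mem_neighborFinset] at hw
    rw [mem_insert, not_or] at hwA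
    have hsmaller : ∀ b ∈ A, #A < G.degree b := fun b hb =>
      (card_lt_card (ssubset_insert haA)).trans (hdeg b (mem_insert_of_mem hb))
    refine (ih (fun b hb => hA b (mem_insert_of_mem hb)) hsmaller).of_subset_zfStep ?_
    rintro ⟨e, he⟩ heA
    by_cases hea : e = s(v, a)
    · subst hea
      exact mk_mem_zfStep_lineGraph hva hw hwA.1 (by simpa [hw.ne'] using hwA.2)
    · apply subset_zfStep_s4
      simpa [hea, eq_comm] using heA

lemma ncard_lineGraph_compl_star [Finite V] {v : V} {A : Finset V} (hA : ∀ a ∈ A, G.Adj v a) :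
    {e : G.edgeSet | (e : Sym2 V) ∉ (s(v, ·)) '' (A : Set V)}.ncard = G.edgeSet.ncard - #A := by
  have hsub : (s(v, ·)) '' (A : Set V) ⊆ G.edgeSet := by
    rintro _ ⟨a, ha, rfl⟩
    exact hA a ha
  calc _ = (Subtype.val ⁻¹' (G.edgeSet \ (s(v, ·)) '' (A : Set V)) : Set G.edgeSet).ncard := by
        congr 1
        ext e
        simp
    _ = (G.edgeSet \ (s(v, ·)) '' (A : Set V)).ncard :=
        Set.ncard_preimage_of_injective_subset_range Subtype.val_injective (by simp)
    _ = G.edgeSet.ncard - ((s(v, ·)) '' (A : Set V)).ncard := Set.ncard_sdiff hsub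
    _ = G.edgeSet.ncard - #A := by
        rw [Set.ncard_image_of_injective _ fun _ _ => Sym2.congr_right.mp, Set.ncard_coe_finset]

end SimpleGraph

theorem zeroForcingNum_lineGraph_le_general {V : Type*} [Fintype V]
    (G : SimpleGraph V) [DecidableRel G.Adj] :
    zeroForcingNum G.lineGraph ≤ G.edgeSet.ncard - (G.minDegree - 1) := by
  cases isEmpty_or_nonempty V
  · exact (zeroForcingNum_le_ncard (S := ∅) ⟨0, Subsingleton.elim _ _⟩).trans (by simp)
  obtain ⟨v, hv⟩ := G.exists_minimal_degree_vertex
  obtain ⟨A, hAv, hA⟩ :=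
    Finset.exists_subset_card_eq (s := G.neighborFinset v) (n := G.minDegree - 1) <| by
      rw [card_neighborFinset_eq_degree, ← hv]
      omega
  have hAdj : ∀ a ∈ A, G.Adj v a := fun a ha => (G.mem_neighborFinset v a).mp (hAv ha)
  have hdeg : ∀ a ∈ A, A.card < G.degree a := fun a ha => by
    have := G.minDegree_le_degree a
    have := Finset.card_pos.mpr ⟨a, ha⟩
    omega
  rw [← hA, ← ncard_lineGraph_compl_star hAdj]
  exact zeroForcingNum_le_ncard (isZeroForcingSet_lineGraph_compl_star hAdj hdeg)

/-- For any connected graph `G` of order `n ≥ 2`, `Z(L(G)) ≤ |E(G)| - (δ(G) - 1)`. -/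
theorem zeroForcingNum_lineGraph_le {V : Type*} [Fintype V] [DecidableEq V]
    (G : SimpleGraph V) [DecidableRel G.Adj]
    (hn : 2 ≤ Fintype.card V) (hconn : G.Connected) :
    zeroForcingNum G.lineGraph ≤ G.edgeSet.ncard - (G.minDegree - 1) :=
  zeroForcingNum_lineGraph_le_general G
end

section
/- For any tree T of order at least 2, the zero forcing number of T is at most the zero forcing number of its line graph: Z(T) ≤ Z(L(T)). -/
open SimpleGraph

variable {V : Type*}

/-!
Fix a vertex `x` of the tree `T` and colour every leaf other than `x` black. Among the white
vertices, one farthest from `x` is either itself such a leaf, or has a child all of whose other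
neighbours lie farther from `x`, so that child forces it. Taking `x` to be a leaf gives
`Z(T) ≤ ℓ - 1` for the number `ℓ` of leaves. Conversely, in a zero forcing process on `L(T)` an
edge `f` forced through its endpoint `w` is the last edge at `w` to turn black, so `f ↦ w`
injects the initially white edges into the non-leaves: `(n - 1) - |S| ≤ n - ℓ`.
-/

namespace SimpleGraph

variable {G : SimpleGraph V}

def leafSet (G : SimpleGraph V) : Set V := {v | (G.neighborSet v).ncard = 1}

lemma isZeroForcingSet_of_forall_zfStep_subset [Finite V] {S : Set V}
    (h : ∀ C, S ⊆ C → zfStep G C ⊆ C → C = Set.univ) : IsZeroForcingSet G S := by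
  have hmono : Monotone fun n => (zfStep G)^[n] S :=
    monotone_nat_of_le_succ fun n => by
      rw [Function.iterate_succ_apply']
      exact Set.subset_union_left
  obtain ⟨n, hn⟩ := WellFoundedGT.monotone_chain_condition ⟨_, hmono⟩
  refine ⟨n, h _ ?_ ?_⟩
  · exact hmono (Nat.zero_le n)
  · have := hn (n + 1) n.le_succ
    simp only [OrderHom.coe_mk, Function.iterate_succ_apply'] at this
    exact this.ge

/-- `τ v` can be taken to be the round in which `v` turns black. -/
lemma IsZeroForcingSet.exists_forcingTime {S : Set V} (hS : IsZeroForcingSet G S) :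
    ∃ τ : V → ℕ, ∀ v ∉ S,
      ∃ u, G.Adj u v ∧ τ u < τ v ∧ ∀ w, G.Adj u w → w ≠ v → τ w < τ v := by
  classical
  obtain ⟨m, hm⟩ := hS
  have hall : ∀ v, ∃ n, v ∈ (zfStep G)^[n] S := fun v => ⟨m, hm ▸ Set.mem_univ v⟩
  refine ⟨fun v => Nat.find (hall v), fun v hv => ?_⟩
  obtain ⟨k, hk⟩ : ∃ k, Nat.find (hall v) = k + 1 :=
    Nat.exists_eq_add_one.mpr <| Nat.pos_of_ne_zero fun h => hv <| by
      simpa [h] using Nat.find_spec (hall v)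
  have hvk : v ∉ (zfStep G)^[k] S := Nat.find_min (hall v) (by omega)
  have hv_succ := Nat.find_spec (hall v)
  rw [hk, Function.iterate_succ_apply'] at hv_succ
  obtain hv' | ⟨u, hu, huv, hforce⟩ := hv_succ
  · exact absurd hv' hvk
  have black_before : ∀ w, w ∈ (zfStep G)^[k] S → Nat.find (hall w) < Nat.find (hall v) :=
    fun w hw => hk ▸ Nat.lt_succ_of_le (Nat.find_min' (hall w) hw)
  refine ⟨u, huv, black_before u hu, fun w huw hwv => black_before w ?_⟩
  by_contra hw
  exact hwv (hforce w huw hw)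

lemma one_lt_ncard_neighborSet_of_mem_of_mem [Finite V] {e f : G.edgeSet} {w : V} (hef : e ≠ f)
    (he : w ∈ (e : Sym2 V)) (hf : w ∈ (f : Sym2 V)) : 1 < (G.neighborSet w).ncard := by
  classical
  have hcard : (G.incidenceSet w).ncard = (G.neighborSet w).ncard := by
    simp only [← Nat.card_coe_set_eq]
    exact Nat.card_congr (G.incidenceSetEquivNeighborSet w)
  rw [← hcard, Set.one_lt_ncard (Set.toFinite _)]
  exact ⟨e, ⟨e.2, he⟩, f, ⟨f.2, hf⟩, fun h => hef (Subtype.ext h)⟩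

theorem ncard_compl_le_ncard_compl_leafSet [Finite V] {S : Set G.edgeSet}
    (hS : IsZeroForcingSet G.lineGraph S) : Sᶜ.ncard ≤ G.leafSetᶜ.ncard := by
  obtain ⟨τ, hτ⟩ := hS.exists_forcingTime
  have forced_through : ∀ f : ↥Sᶜ, ∃ w ∈ (f : Sym2 V), w ∈ G.leafSetᶜ ∧
      ∀ g : G.edgeSet, w ∈ (g : Sym2 V) → g ≠ f → τ g < τ f := by
    intro f
    obtain ⟨e, hef, hτe, hτ_nbrs⟩ := hτ f f.2
    obtain ⟨hne, w, hwe, hwf⟩ := lineGraph_adj_iff_exists.mp hef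
    refine ⟨w, hwf, (one_lt_ncard_neighborSet_of_mem_of_mem hne hwe hwf).ne',
      fun g hwg hgf => ?_⟩
    by_cases hge : g = e
    · exact hge ▸ hτe
    · exact hτ_nbrs g (lineGraph_adj_iff_exists.mpr ⟨Ne.symm hge, w, hwe, hwg⟩) hgf
  choose φ hφf hφ_nonleaf hφτ using forced_through
  have hinj : Function.Injective fun f => (⟨φ f, hφ_nonleaf f⟩ : ↥G.leafSetᶜ) := by
    intro f₁ f₂ hφ_eq
    have heq : φ f₁ = φ f₂ := congrArg Subtype.val hφ_eq
    by_contra hne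
    have hne' : (f₁ : G.edgeSet) ≠ f₂ := fun h => hne (Subtype.ext h)
    have h₁ := hφτ f₁ f₂ (heq ▸ hφf f₂ :) hne'.symm
    have h₂ := hφτ f₂ f₁ (heq.symm ▸ hφf f₁ :) hne'
    omega
  simpa only [Nat.card_coe_set_eq] using Nat.card_le_card_of_injective _ hinj

variable {T : SimpleGraph V}

lemma IsTree.eq_of_adj_of_dist_add_one_eq (hT : T.IsTree) (x : V) {c u₁ u₂ : V}
    (h₁ : T.Adj u₁ c) (h₂ : T.Adj u₂ c) (hd₁ : T.dist x u₁ + 1 = T.dist x c)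
    (hd₂ : T.dist x u₂ + 1 = T.dist x c) : u₁ = u₂ := by
  classical
  have not_mem : ∀ {u} (p : T.Walk x u), p.length + 1 = T.dist x c → c ∉ p.support :=
    fun p hp hc => by
      have := T.dist_le (p.takeUntil c hc)
      have := p.length_takeUntil_le_length hc
      omega
  obtain ⟨p₁, hp₁, hl₁⟩ := hT.connected.exists_path_of_dist x u₁
  obtain ⟨p₂, hp₂, hl₂⟩ := hT.connected.exists_path_of_dist x u₂
  have hq₁ := hp₁.concat (not_mem p₁ (hl₁ ▸ hd₁)) h₁
  have hmem : u₂ ∈ (p₁.concat h₁).support :=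
    hT.isAcyclic.mem_support_of_ne_mem_support_of_adj_of_isPath hq₁ hp₂ h₂.symm
      (not_mem p₂ (hl₂ ▸ hd₂))
  have := hT.isAcyclic.eq_penultimate_of_adj_end hq₁ h₂.symm hmem
  simpa [Walk.penultimate_concat] using this.symm

theorem IsTree.isZeroForcingSet_leafSet_diff_singleton [Finite V] [Nontrivial V]
    (hT : T.IsTree) (x : V) : IsZeroForcingSet T (T.leafSet \ {x}) := by
  refine isZeroForcingSet_of_forall_zfStep_subset fun C hSC hC => ?_
  by_contra hCne
  obtain ⟨v, hv, hv_max⟩ := Set.exists_max_image Cᶜ (T.dist x) (Set.toFinite _)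
    (Set.nonempty_compl.mpr hCne)
  have deeper_black : ∀ u, T.dist x v < T.dist x u → u ∈ C := fun u hu => by
    by_contra h
    exact (hv_max u h).not_gt hu
  apply hv
  by_cases hchild : ∃ c, T.Adj v c ∧ T.dist x c = T.dist x v + 1
  · obtain ⟨c, hvc, hc⟩ := hchild
    refine hC (Or.inr ⟨c, deeper_black c (by omega), hvc.symm, fun w hcw hw => ?_⟩)
    rcases hT.dist_eq_dist_add_one_of_adj x hcw with hparent | hchild
    · exact hT.eq_of_adj_of_dist_add_one_eq x hcw.symm hvc hparent.symm hc.symm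
    · exact absurd (deeper_black w (by omega)) hw
  · push Not at hchild
    obtain ⟨p, hvp⟩ := hT.connected.preconnected.exists_adj_of_nontrivial v
    have parent : ∀ u, T.Adj v u → T.dist x u + 1 = T.dist x v := fun u hvu =>
      ((hT.dist_eq_dist_add_one_of_adj x hvu).resolve_right (hchild u hvu)).symm
    refine hSC ⟨?_, fun hvx => ?_⟩
    · have : T.neighborSet v = {p} := Set.eq_singleton_iff_unique_mem.mpr ⟨hvp, fun u hvu =>
        hT.eq_of_adj_of_dist_add_one_eq x hvu.symm hvp.symm (parent u hvu) (parent p hvp)⟩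
      simp [leafSet, this]
    · have := parent p hvp
      rw [Set.mem_singleton_iff.mp hvx, dist_self] at this
      omega

lemma IsTree.ncard_leafSet_le_ncard_add_one [Finite V] (hT : T.IsTree) {S : Set T.edgeSet}
    (hS : IsZeroForcingSet T.lineGraph S) : T.leafSet.ncard ≤ S.ncard + 1 := by
  have hcount := ncard_compl_le_ncard_compl_leafSet hS
  have hedges := (isTree_iff_connected_and_card.mp hT).2
  have := S.ncard_add_ncard_compl
  have := T.leafSet.ncard_add_ncard_compl
  omega

lemma IsTree.exists_mem_leafSet [Finite V] [Nontrivial V] (hT : T.IsTree) :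
    ∃ x, x ∈ T.leafSet := by
  classical
  have := Fintype.ofFinite V
  obtain ⟨x, hx⟩ := hT.exists_vert_degree_one_of_nontrivial
  refine ⟨x, ?_⟩
  rw [leafSet, Set.mem_ofPred_eq, ← hx, ← card_neighborSet_eq_degree,
    Set.ncard_eq_toFinset_card']
  simp

end SimpleGraph

/-- For any tree `T` of order at least 2, `Z(T) ≤ Z(L(T))`. -/
theorem zeroForcingNum_le_zeroForcingNum_lineGraph_of_isTree {V : Type*} [Fintype V]
    (T : SimpleGraph V) (hT : T.IsTree) (hn : 2 ≤ Fintype.card V) :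
    zeroForcingNum T ≤ zeroForcingNum T.lineGraph := by
  have : Nontrivial V := Fintype.one_lt_card_iff_nontrivial.mp hn
  obtain ⟨x, hx⟩ := hT.exists_mem_leafSet
  obtain ⟨S, hS_card, hS⟩ : zeroForcingNum T.lineGraph ∈
      {k | ∃ S : Set T.edgeSet, S.ncard = k ∧ IsZeroForcingSet T.lineGraph S} :=
    Nat.sInf_mem ⟨_, Set.univ, rfl, 0, rfl⟩
  have hleaves := hT.ncard_leafSet_le_ncard_add_one hS
  calc zeroForcingNum T ≤ (T.leafSet \ {x}).ncard :=
        Nat.sInf_le ⟨_, rfl, hT.isZeroForcingSet_leafSet_diff_singleton x⟩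
    _ = T.leafSet.ncard - 1 := Set.ncard_sdiff_singleton_of_mem hx
    _ ≤ S.ncard := by omega
    _ = zeroForcingNum T.lineGraph := hS_card
end

section
/- For any tree T of order at least 2, the metric dimension of the line graph of T is at most the zero forcing number of the line graph of T: dim(L(T)) ≤ Z(L(T)). -/
/-!
Every zero forcing set `S` of `L(T)` resolves `L(T)`. A zero forcing set meets every fort, a
nonempty vertex set `F` no outside vertex of which has exactly one neighbour in `F`: forcing into
`F` can never start. So it suffices that, for edges `e ≠ f` of `T`, the vertices of `L(T)` not
equidistant from `e` and `f` form a fort. This is a property of the block graph `L(T)`: the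
neighbours of `u` that are not farther than `u` from a target `x` all contain the endpoint of `u`
nearer to `x`, and at most one of them is closer to `x`. Hence if `u` is equidistant from `e` and
`f` and has a neighbour closer to `e`, its neighbour on a geodesic to `f` cannot also be closer to
`e`, so it is closer to `f`.
-/

open SimpleGraph

variable {V : Type*}

namespace SimpleGraph

variable {G : SimpleGraph V}

lemma Reachable.exists_adj_dist_add_one_eq {u v : V} (h : G.Reachable u v) (huv : u ≠ v) :
    ∃ w, G.Adj u w ∧ G.dist w v + 1 = G.dist u v := by
  obtain ⟨p, hp⟩ := h.exists_walk_length_eq_dist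
  have hnil : ¬p.Nil := fun hn => huv hn.eq
  have hadj := p.adj_snd hnil
  refine ⟨p.snd, hadj, le_antisymm ?_ ?_⟩
  · have := dist_le p.tail
    have := p.length_tail_add_one hnil
    omega
  · have := hadj.reachable.dist_triangle_left v
    rwa [dist_eq_one_iff_adj.2 hadj, add_comm] at this

lemma dist_le_one_of_mem_edgeSet {e : Sym2 V} (he : e ∈ G.edgeSet) {a b : V} (ha : a ∈ e)
    (hb : b ∈ e) : G.dist a b ≤ 1 := by
  rcases eq_or_ne a b with rfl | hab
  · simp
  · exact (dist_eq_one_iff_adj.2 (adj_iff_exists_edge.2 ⟨hab, e, he, ha, hb⟩)).le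

lemma IsTree.eq_of_adj_of_dist_lt (hG : G.IsTree) {b c c' y : V} (hc : G.Adj b c)
    (hc' : G.Adj b c') (h : G.dist c y < G.dist b y) (h' : G.dist c' y < G.dist b y) :
    c = c' := by
  -- `c` is the second vertex of the path `b, c, …, y` of length `dist b y`, which is unique
  have key : ∀ {c}, G.Adj b c → G.dist c y < G.dist b y →
      ∃ p : G.Path b y, (p : G.Walk b y).snd = c := by
    intro c hc h
    obtain ⟨q, hq⟩ := hG.connected.exists_walk_length_eq_dist c y
    have hlen : (Walk.cons hc q).length = G.dist b y := by
      have := hc.reachable.dist_triangle_left y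
      rw [dist_eq_one_iff_adj.2 hc] at this
      rw [Walk.length_cons]
      omega
    exact ⟨⟨_, (Walk.cons hc q).isPath_of_length_eq_dist hlen⟩, by simp⟩
  obtain ⟨p, rfl⟩ := key hc h
  obtain ⟨p', rfl⟩ := key hc' h'
  rw [hG.isAcyclic.subsingleton_path b y |>.elim p p']

noncomputable def infDist (G : SimpleGraph V) (a : V) (e : Sym2 V) : ℕ :=
  Sym2.lift ⟨fun y z => min (G.dist a y) (G.dist a z), fun _ _ => min_comm _ _⟩ e

lemma infDist_le_dist {a y : V} {e : Sym2 V} (hy : y ∈ e) : G.infDist a e ≤ G.dist a y := by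
  induction e using Sym2.ind with
  | _ z z' => rcases Sym2.mem_iff.1 hy with rfl | rfl <;> simp [infDist]

lemma exists_mem_dist_eq_infDist (a : V) (e : Sym2 V) :
    ∃ y ∈ e, G.dist a y = G.infDist a e := by
  induction e using Sym2.ind with
  | _ z z' =>
    rcases le_total (G.dist a z) (G.dist a z') with h | h
    · exact ⟨z, Sym2.mem_mk_left z z', by simp [infDist, h]⟩
    · exact ⟨z', Sym2.mem_mk_right z z', by simp [infDist, h]⟩

lemma IsTree.infDist_ne_of_adj (hG : G.IsTree) {a b : V} {e : Sym2 V} (hab : G.Adj a b)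
    (he : e ∈ G.edgeSet) (hne : s(a, b) ≠ e) : G.infDist a e ≠ G.infDist b e := by
  intro hk
  obtain ⟨y, hy, hay⟩ := exists_mem_dist_eq_infDist (G := G) a e
  obtain ⟨y', hy', hby'⟩ := exists_mem_dist_eq_infDist (G := G) b e
  rcases eq_or_ne y y' with rfl | hyy'
  · exact hG.dist_ne_of_adj y hab (by rw [dist_comm, hay, hk, ← hby', dist_comm])
  have he' : e = s(y, y') := (Sym2.mem_and_mem_iff hyy').1 ⟨hy, hy'⟩
  have hadj : G.Adj y y' := by rwa [he', mem_edgeSet] at he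
  have hay' : G.dist a y < G.dist a y' := by
    have := hG.dist_ne_of_adj a hadj
    have := infDist_le_dist (G := G) (a := a) hy'
    omega
  have hby : G.dist b y' < G.dist b y := by
    have := hG.dist_ne_of_adj b hadj
    have := infDist_le_dist (G := G) (a := b) hy
    omega
  rcases eq_or_ne a y with rfl | hay0
  · have : b = y' := by
      rw [dist_self] at hay
      by_contra hby0
      have := hG.connected.pos_dist_of_ne hby0
      omega
    exact hne (this ▸ he'.symm)
  -- the first step from `a` towards `y` is, like `b`, closer to `y'` than `a` is
  obtain ⟨a', ha', ha'y⟩ := (hG.connected a y).exists_adj_dist_add_one_eq hay0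
  have := dist_eq_one_iff_adj.2 hadj
  have := hG.connected.dist_triangle (u := a') (v := y) (w := y')
  have hab' : a' = b := hG.eq_of_adj_of_dist_lt (y := y') ha' hab (by omega) (by omega)
  subst hab'
  have := hG.connected.dist_triangle (u := a') (v := a) (w := y)
  omega

lemma IsTree.eq_of_adj_of_infDist_lt (hG : G.IsTree) {b c c' : V} {e : Sym2 V}
    (he : e ∈ G.edgeSet) (hc : G.Adj b c) (hc' : G.Adj b c') (h : G.infDist c e < G.infDist b e)
    (h' : G.infDist c' e < G.infDist b e) : c = c' := by
  obtain ⟨y, hy, hcy⟩ := exists_mem_dist_eq_infDist (G := G) c e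
  obtain ⟨y', hy', hcy'⟩ := exists_mem_dist_eq_infDist (G := G) c' e
  have hby := infDist_le_dist (G := G) (a := b) hy
  refine hG.eq_of_adj_of_dist_lt (y := y) hc hc' (by omega) ?_
  have := hG.connected.dist_triangle (u := c') (v := y') (w := y)
  have := dist_le_one_of_mem_edgeSet he hy' hy
  have : G.dist y c' ≠ G.dist y b := hG.dist_ne_of_adj y hc'.symm
  rw [dist_comm (u := y), dist_comm (u := y)] at this
  omega

lemma Walk.exists_lineGraph_walk {a b : V} (p : G.Walk a b) {g h : G.edgeSet}
    (ha : a ∈ (g : Sym2 V)) (hb : b ∈ (h : Sym2 V)) :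
    ∃ q : G.lineGraph.Walk g h, q.length ≤ p.length + 1 := by
  induction p generalizing g with
  | nil =>
    by_cases hgh : g = h
    · exact ⟨hgh ▸ Walk.nil, by subst hgh; simp⟩
    · exact ⟨Walk.cons (lineGraph_adj_iff_exists.2 ⟨hgh, _, ha, hb⟩) Walk.nil, by simp⟩
  | @cons a c b hac p ih =>
    obtain ⟨q, hq⟩ := ih (g := ⟨s(a, c), hac⟩) (Sym2.mem_mk_right a c) hb
    by_cases hg : g = ⟨s(a, c), hac⟩
    · exact ⟨hg ▸ q, by subst hg; simp only [Walk.length_cons]; omega⟩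
    · have hadj : G.lineGraph.Adj g ⟨s(a, c), hac⟩ :=
        lineGraph_adj_iff_exists.2 ⟨hg, a, ha, Sym2.mem_mk_left a c⟩
      exact ⟨Walk.cons hadj q, by simp only [Walk.length_cons]; omega⟩

lemma Preconnected.lineGraph (hG : G.Preconnected) : G.lineGraph.Preconnected := fun g h =>
  let ⟨p⟩ := hG g.1.out.1 h.1.out.1
  let ⟨q, _⟩ := p.exists_lineGraph_walk (Sym2.out_fst_mem _) (Sym2.out_fst_mem _)
  ⟨q⟩

lemma Connected.lineGraph_dist_le (hG : G.Connected) {a : V} {g : G.edgeSet}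
    (ha : a ∈ (g : Sym2 V)) (h : G.edgeSet) : G.lineGraph.dist g h ≤ G.infDist a h + 1 := by
  obtain ⟨y, hy, hay⟩ := exists_mem_dist_eq_infDist (G := G) a h
  obtain ⟨p, hp⟩ := hG.exists_walk_length_eq_dist a y
  obtain ⟨q, hq⟩ := p.exists_lineGraph_walk ha hy
  exact (dist_le q).trans (by omega)

lemma Connected.exists_dist_add_one_le_length_of_lineGraph_walk (hG : G.Connected)
    {g h : G.edgeSet} (q : G.lineGraph.Walk g h) (hgh : g ≠ h) :
    ∃ a ∈ (g : Sym2 V), ∃ b ∈ (h : Sym2 V), G.dist a b + 1 ≤ q.length := by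
  induction q with
  | nil => exact absurd rfl hgh
  | @cons g g' h hadj q ih =>
    obtain ⟨-, s, hsg, hsg'⟩ := lineGraph_adj_iff_exists.1 hadj
    by_cases hg'h : g' = h
    · subst hg'h
      exact ⟨s, hsg, s, hsg', by simp⟩
    obtain ⟨a, ha, b, hb, hab⟩ := ih hg'h
    have := hG.dist_triangle (u := s) (v := a) (w := b)
    have := dist_le_one_of_mem_edgeSet g'.2 hsg' ha
    exact ⟨s, hsg, b, hb, by simp only [Walk.length_cons]; omega⟩

lemma Connected.exists_infDist_add_one_le_lineGraph_dist (hG : G.Connected) {g h : G.edgeSet}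
    (hgh : g ≠ h) : ∃ a ∈ (g : Sym2 V), G.infDist a h + 1 ≤ G.lineGraph.dist g h := by
  obtain ⟨q, hq⟩ := (hG.preconnected.lineGraph g h).exists_walk_length_eq_dist
  obtain ⟨a, ha, b, hb, hab⟩ := hG.exists_dist_add_one_le_length_of_lineGraph_walk q hgh
  have := infDist_le_dist (G := G) (a := a) hb
  exact ⟨a, ha, by omega⟩

lemma Connected.exists_adj_infDist_lt (hG : G.Connected) {g x : G.edgeSet} {a : V}
    (ha : a ∈ (g : Sym2 V)) (hgx : g ≠ x) (h : G.lineGraph.dist g x < G.infDist a x + 1) :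
    ∃ c, G.Adj a c ∧ (g : Sym2 V) = s(a, c) ∧ G.infDist c x < G.infDist a x := by
  obtain ⟨c, hc, hcx⟩ := hG.exists_infDist_add_one_le_lineGraph_dist hgx
  have hac : a ≠ c := by rintro rfl; omega
  exact ⟨c, adj_iff_exists_edge.2 ⟨hac, g, g.2, ha, hc⟩,
    (Sym2.mem_and_mem_iff hac).1 ⟨ha, hc⟩, by omega⟩

lemma IsTree.exists_lineGraph_dist_eq_infDist_add_one (hT : G.IsTree) {u x : G.edgeSet}
    (hux : u ≠ x) : ∃ a b, (u : Sym2 V) = s(a, b) ∧ G.Adj a b ∧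
      G.lineGraph.dist u x = G.infDist a x + 1 ∧ G.infDist a x < G.infDist b x := by
  obtain ⟨a, ha, hle⟩ := hT.connected.exists_infDist_add_one_le_lineGraph_dist hux
  have hu := (Sym2.other_spec ha).symm
  have hab : G.Adj a (Sym2.Mem.other ha) := by rw [← mem_edgeSet, ← hu]; exact u.2
  have hne := hT.infDist_ne_of_adj hab x.2 fun h => hux (Subtype.ext (hu.trans h))
  have := hT.connected.lineGraph_dist_le ha x
  have := hT.connected.lineGraph_dist_le (Sym2.other_mem ha) x
  exact ⟨a, _, hu, hab, by omega, by omega⟩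

lemma IsTree.mem_of_lineGraph_adj_of_dist_le (hT : G.IsTree) {u g x : G.edgeSet} {a b : V}
    (hu : (u : Sym2 V) = s(a, b)) (hab : G.Adj a b)
    (hux : G.lineGraph.dist u x = G.infDist a x + 1) (hlt : G.infDist a x < G.infDist b x)
    (hug : G.lineGraph.Adj u g) (hgx : G.lineGraph.dist g x ≤ G.lineGraph.dist u x) :
    a ∈ (g : Sym2 V) := by
  obtain ⟨-, s, hsu, hsg⟩ := lineGraph_adj_iff_exists.1 hug
  rw [hu, Sym2.mem_iff] at hsu
  rcases hsu with rfl | rfl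
  · exact hsg
  by_cases hgx' : g = x
  · subst hgx'
    have := infDist_le_dist (G := G) (a := s) hsg
    rw [dist_self] at this
    omega
  obtain ⟨c, hsc, hg, hc⟩ := hT.connected.exists_adj_infDist_lt hsg hgx' (by omega)
  obtain rfl := hT.eq_of_adj_of_infDist_lt x.2 hab.symm hsc hlt hc
  rw [hg]
  exact Sym2.mem_mk_right _ _

theorem IsTree.lineGraph_adj_and_dist_eq (hT : G.IsTree) {u v w x : G.edgeSet}
    (huv : G.lineGraph.Adj u v) (huw : G.lineGraph.Adj u w) (hvw : v ≠ w)
    (hv : G.lineGraph.dist v x ≤ G.lineGraph.dist u x)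
    (hw : G.lineGraph.dist w x < G.lineGraph.dist u x) :
    G.lineGraph.Adj v w ∧ G.lineGraph.dist v x = G.lineGraph.dist u x := by
  have hux : u ≠ x := by rintro rfl; simp at hw
  obtain ⟨a, b, hu, hab, hdist, hlt⟩ := hT.exists_lineGraph_dist_eq_infDist_add_one hux
  have hav := hT.mem_of_lineGraph_adj_of_dist_le hu hab hdist hlt huv hv
  have haw := hT.mem_of_lineGraph_adj_of_dist_le hu hab hdist hlt huw hw.le
  refine ⟨lineGraph_adj_iff_exists.2 ⟨hvw, a, hav, haw⟩, hv.antisymm <| not_lt.1 fun hv' => ?_⟩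
  apply hvw
  have hL := hT.connected.preconnected.lineGraph
  by_cases ha : G.infDist a x = 0
  · have hvx := (hL v x).dist_eq_zero_iff.1 (by omega)
    have hwx := (hL w x).dist_eq_zero_iff.1 (by omega)
    rw [hvx, hwx]
  have hvx : v ≠ x := by
    rintro rfl
    have := infDist_le_dist (G := G) (a := a) hav
    simp_all
  have hwx : w ≠ x := by
    rintro rfl
    have := infDist_le_dist (G := G) (a := a) haw
    simp_all
  obtain ⟨c, hac, hv, hc⟩ := hT.connected.exists_adj_infDist_lt hav hvx (by omega)
  obtain ⟨c', hac', hw, hc'⟩ := hT.connected.exists_adj_infDist_lt haw hwx (by omega)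
  rw [hT.eq_of_adj_of_infDist_lt x.2 hac hac' hc hc'] at hv
  exact Subtype.ext (hv.trans hw.symm)

end SimpleGraph

section ZeroForcing

def IsFort (G : SimpleGraph V) (F : Set V) : Prop :=
  F.Nonempty ∧ ∀ u ∉ F, ∀ v ∈ F, G.Adj u v → ∃ w ∈ F, w ≠ v ∧ G.Adj u w

variable {G : SimpleGraph V} {S F : Set V}

lemma IsFort.disjoint_zfStep (hF : IsFort G F) (hS : Disjoint S F) :
    Disjoint (zfStep G S) F := by
  rw [Set.disjoint_left]
  rintro v (hv | ⟨u, hu, huv, huniq⟩) hvF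
  · exact Set.disjoint_left.1 hS hv hvF
  · obtain ⟨w, hwF, hwv, huw⟩ := hF.2 u (Set.disjoint_left.1 hS hu) v hvF huv
    exact hwv (huniq w huw (Set.disjoint_right.1 hS hwF))

lemma IsZeroForcingSet.inter_nonempty_of_isFort (hS : IsZeroForcingSet G S) (hF : IsFort G F) :
    (S ∩ F).Nonempty := by
  rw [← Set.not_disjoint_iff_nonempty_inter]
  intro hSF
  obtain ⟨m, hm⟩ := hS
  have hdisj : ∀ n, Disjoint ((zfStep G)^[n] S) F := fun n => by
    induction n with
    | zero => exact hSF
    | succ n ih => rw [Function.iterate_succ_apply']; exact hF.disjoint_zfStep ih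
  have := hdisj m
  rw [hm, Set.univ_disjoint] at this
  exact hF.1.ne_empty this

lemma IsZeroForcingSet.isResolvingSet (hS : IsZeroForcingSet G S)
    (hF : ∀ u v, u ≠ v → IsFort G {w | G.dist w u ≠ G.dist w v}) : IsResolvingSet G S :=
  fun u v huv =>
    let ⟨w, hwS, hw⟩ := hS.inter_nonempty_of_isFort (hF u v huv)
    ⟨w, hwS, by rwa [dist_comm, dist_comm (u := v)]⟩

lemma exists_adj_dist_lt_of_dist_eq (hG : G.Preconnected)
    (hQ : ∀ ⦃u v w x⦄, G.Adj u v → G.Adj u w → v ≠ w → G.dist v x ≤ G.dist u x →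
      G.dist w x < G.dist u x → G.Adj v w ∧ G.dist v x = G.dist u x)
    {e f u v : V} (hef : e ≠ f) (hu : G.dist u e = G.dist u f) (huv : G.Adj u v)
    (hv : G.dist v e < G.dist v f) : ∃ w, G.Adj u w ∧ G.dist w f < G.dist w e := by
  have huf : u ≠ f := by
    rintro rfl
    rw [dist_self] at hu
    exact hef ((hG u e).dist_eq_zero_iff.1 hu).symm
  obtain ⟨w, huw, hw⟩ := (hG u f).exists_adj_dist_add_one_eq huf
  refine ⟨w, huw, not_le.1 fun hwe => ?_⟩
  have hue := huw.reachable.dist_triangle_left e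
  have hvu := huv.symm.reachable.dist_triangle_left f
  rw [dist_eq_one_iff_adj.2 huw] at hue
  rw [dist_eq_one_iff_adj.2 huv.symm] at hvu
  have hvw : v ≠ w := by rintro rfl; omega
  obtain ⟨hvw_adj, hve⟩ := hQ (x := e) huv huw hvw (by omega) (by omega)
  have hvf := hvw_adj.reachable.dist_triangle_left f
  rw [dist_eq_one_iff_adj.2 hvw_adj] at hvf
  omega

lemma isFort_setOf_dist_ne (hG : G.Preconnected)
    (hQ : ∀ ⦃u v w x⦄, G.Adj u v → G.Adj u w → v ≠ w → G.dist v x ≤ G.dist u x →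
      G.dist w x < G.dist u x → G.Adj v w ∧ G.dist v x = G.dist u x)
    {e f : V} (hef : e ≠ f) : IsFort G {w | G.dist w e ≠ G.dist w f} := by
  refine ⟨⟨e, ?_⟩, fun u hu v hv huv => ?_⟩
  · rw [Set.mem_ofPred_eq, dist_self, ne_comm, Ne, (hG e f).dist_eq_zero_iff]
    exact hef
  simp only [Set.mem_ofPred_eq, not_not] at hu hv ⊢
  rcases hv.lt_or_gt with hv | hv
  · obtain ⟨w, huw, hw⟩ := exists_adj_dist_lt_of_dist_eq hG hQ hef hu huv hv
    exact ⟨w, hw.ne', fun h => by subst h; omega, huw⟩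
  · obtain ⟨w, huw, hw⟩ := exists_adj_dist_lt_of_dist_eq hG hQ hef.symm hu.symm huv hv
    exact ⟨w, hw.ne, fun h => by subst h; omega, huw⟩

lemma metricDim_le_zeroForcingNum_of_forall_isResolvingSet
    (h : ∀ S, IsZeroForcingSet G S → IsResolvingSet G S) :
    metricDim G ≤ zeroForcingNum G := by
  have hne : {k | ∃ S : Set V, S.ncard = k ∧ IsZeroForcingSet G S}.Nonempty :=
    ⟨_, Set.univ, rfl, 0, rfl⟩
  obtain ⟨S, hcard, hS⟩ := Nat.sInf_mem hne
  exact Nat.sInf_le ⟨S, hcard, h S hS⟩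

end ZeroForcing

theorem metricDim_lineGraph_le_zeroForcingNum_lineGraph_of_isTree_general {V : Type*}
    (T : SimpleGraph V) (hT : T.IsTree) :
    metricDim T.lineGraph ≤ zeroForcingNum T.lineGraph :=
  metricDim_le_zeroForcingNum_of_forall_isResolvingSet fun _ hS =>
    hS.isResolvingSet fun _ _ huv =>
      isFort_setOf_dist_ne hT.connected.preconnected.lineGraph
        (fun _ _ _ _ => hT.lineGraph_adj_and_dist_eq) huv

/-- For any tree `T` of order at least 2, `dim(L(T)) ≤ Z(L(T))`. -/
theorem metricDim_lineGraph_le_zeroForcingNum_lineGraph_of_isTree {V : Type*}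
    [Fintype V] (T : SimpleGraph V) (hT : T.IsTree) (hn : 2 ≤ Fintype.card V) :
    metricDim T.lineGraph ≤ zeroForcingNum T.lineGraph :=
  metricDim_lineGraph_le_zeroForcingNum_lineGraph_of_isTree_general T hT
end
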